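/- arXiv:1212.2325 — 10 statements merged into one kernel-verified Lean document; each statement's English description precedes it below -/
import Mathlib

section
/- Let α : ℝ → ℝ be any function with α(x) ∈ (0,1) ∪ (1,2) for all x ∈ ℝ. Then for every R ≥ 0, lim_{x→∞} (1/(1−α(x))) · (1 − (x/(x+R))^{1−α(x)}) = 0. -/
open Filter Real Set

lemma key {t β : ℝ} (ht0 : 0 < t) (ht1 : t ≤ 1) (hβ1 : -1 < β) (hβ2 : β < 1) (hβ0 : β ≠ 0) :
    0 ≤ (1 / β) * (1 - t ^ β) ∧ (1 / β) * (1 - t ^ β) ≤ 1 / t - 1 := by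
  obtain ⟨u, hu⟩ : ∃ u : ℝ, u = 1 / t - 1 := ⟨_, rfl⟩
  have hu0 : 0 ≤ u := by
    have : 1 ≤ 1 / t := by rw [le_div_iff₀ ht0]; linarith
    linarith
  have hs : (1 : ℝ) + u = 1 / t := by rw [hu]; ring
  rw [← hu]
  rcases lt_or_gt_of_ne hβ0 with hneg | hpos
  · have hγ0 : 0 < -β := by linarith
    have hγ1 : -β ≤ 1 := by linarith
    have htβ : t ^ β = (1 + u) ^ (-β) := by
      rw [hs, one_div, Real.inv_rpow ht0.le, Real.rpow_neg ht0.le, inv_inv]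
    have hber : (1 + u) ^ (-β) ≤ 1 + (-β) * u :=
      rpow_one_add_le_one_add_mul_self (by linarith) hγ0.le hγ1
    have hge1 : 1 ≤ (1 + u) ^ (-β) :=
      Real.one_le_rpow (by linarith) hγ0.le
    constructor
    · have h1 : 1 - t ^ β ≤ 0 := by rw [htβ]; linarith
      have h2 : 1 / β ≤ 0 := by
        apply div_nonpos_of_nonneg_of_nonpos <;> linarith
      nlinarith [mul_nonneg (neg_nonneg.2 h2) (neg_nonneg.2 h1)]
    · have heq : (1 / β) * (1 - t ^ β) = (t ^ β - 1) / (-β) := by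
        field_simp; ring
      rw [heq, htβ, div_le_iff₀ hγ0]
      nlinarith
  · have hsβ : (1 + u) ^ β ≤ 1 + β * u :=
      rpow_one_add_le_one_add_mul_self (by linarith) hpos.le hβ2.le
    have hd : 0 < 1 + β * u := by nlinarith
    have htβ : t ^ β = ((1 + u) ^ β)⁻¹ := by
      rw [hs, one_div, Real.inv_rpow ht0.le, inv_inv]
    have hspos : 0 < (1 + u) ^ β := Real.rpow_pos_of_pos (by linarith) _
    have htlb : (1 + β * u)⁻¹ ≤ t ^ β := by
      rw [htβ]
      exact inv_anti₀ hspos hsβ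
    have hinv : 1 - (1 + β * u)⁻¹ ≤ β * u := by
      have hinv' : (1 + β * u) * (1 + β * u)⁻¹ = 1 := mul_inv_cancel₀ hd.ne'
      nlinarith [inv_pos.2 hd, sq_nonneg (β * u)]
    constructor
    · have h1 : 0 ≤ 1 - t ^ β := by
        have : t ^ β ≤ 1 := Real.rpow_le_one ht0.le ht1 hpos.le
        linarith
      have h2 : 0 ≤ 1 / β := by positivity
      exact mul_nonneg h2 h1
    · rw [mul_comm, mul_one_div, div_le_iff₀ hpos]
      nlinarith

/-- **Lemma 3.2.** If `α(x) ∈ (0,1) ∪ (1,2)` for all `x`, then for every `R ≥ 0`,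
`(1/(1−α(x))) (1 − (x/(x+R))^{1−α(x)}) → 0` as `x → ∞`. -/
theorem stmt_1 (α : ℝ → ℝ) (hα : ∀ x, α x ∈ Ioo (0:ℝ) 1 ∪ Ioo (1:ℝ) 2) :
    ∀ R : ℝ, 0 ≤ R →
      Tendsto
        (fun x : ℝ => (1 / (1 - α x)) * (1 - (x / (x + R)) ^ (1 - α x)))
        atTop (nhds 0) := by
  intro R hR
  have hlim : Tendsto (fun x : ℝ => R / x) atTop (nhds 0) :=
    tendsto_const_nhds.div_atTop tendsto_id
  have hkey : ∀ x : ℝ, 0 < x →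
      0 ≤ (1 / (1 - α x)) * (1 - (x / (x + R)) ^ (1 - α x)) ∧
      (1 / (1 - α x)) * (1 - (x / (x + R)) ^ (1 - α x)) ≤ R / x := by
    intro x hx
    have ht0 : 0 < x / (x + R) := by positivity
    have ht1 : x / (x + R) ≤ 1 := by
      rw [div_le_one (by linarith)]; linarith
    have hβ1 : -1 < 1 - α x := by rcases hα x with h | h <;> [linarith [h.2]; linarith [h.2]]
    have hβ2 : 1 - α x < 1 := by rcases hα x with h | h <;> [linarith [h.1]; linarith [h.1]]
    have hβ0 : 1 - α x ≠ 0 := by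
      rintro h0; rw [sub_eq_zero] at h0
      rcases hα x with h | h <;> [exact absurd h.2 (by rw [← h0]; simp); exact absurd h.1 (by rw [← h0]; simp)]
    have hk := key ht0 ht1 hβ1 hβ2 hβ0
    have heq : 1 / (x / (x + R)) - 1 = R / x := by
      field_simp
      ring
    exact ⟨hk.1, by rw [← heq]; exact hk.2⟩
  apply squeeze_zero' ?_ ?_ hlim
  · filter_upwards [eventually_gt_atTop 0] with x hx using (hkey x hx).1
  · filter_upwards [eventually_gt_atTop 0] with x hx using (hkey x hx).2
end

section
/- Let α : ℝ → ℝ satisfy 0 < α(x) for all x and sup_{x∈ℝ} α(x) < 2. Then lim_{x→∞} α(x)·(1+x)^{α(x)} · ∫_{−1}^1 ( ln(1 + y/(1+x)) − y/(1+x) ) · |y|^{−α(x)−1} dy = 0. -/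
open Filter Real MeasureTheory

lemma abs_rpow_intervalIntegrable {p : ℝ} (hp : -1 < p) :
    IntervalIntegrable (fun y : ℝ => |y| ^ p) volume (-1) 1 := by
  have h1 : IntervalIntegrable (fun y : ℝ => y ^ p) volume 0 1 :=
    intervalIntegral.intervalIntegrable_rpow' hp
  have h1' : IntervalIntegrable (fun y : ℝ => |y| ^ p) volume 0 1 := by
    refine h1.congr_ae ?_
    filter_upwards [MeasureTheory.ae_restrict_mem measurableSet_uIoc] with y hy
    rw [Set.uIoc_of_le (by norm_num : (0:ℝ) ≤ 1)] at hy
    rw [abs_of_nonneg hy.1.le]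
  have h2 : IntervalIntegrable (fun y : ℝ => (-y) ^ p) volume (-1) 0 := by
    have := (IntervalIntegrable.iff_comp_neg).mp h1
    simpa using this.symm
  have h2' : IntervalIntegrable (fun y : ℝ => |y| ^ p) volume (-1) 0 := by
    refine h2.congr_ae ?_
    filter_upwards [MeasureTheory.ae_restrict_mem measurableSet_uIoc] with y hy
    rw [Set.uIoc_of_le (by norm_num : (-1:ℝ) ≤ 0)] at hy
    rw [abs_of_nonpos hy.2]
  exact h2'.trans h1'

lemma abs_rpow_integral {p : ℝ} (hp : -1 < p) :
    ∫ y in (-1:ℝ)..1, |y| ^ p = 2 / (p + 1) := by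
  have hp1 : p + 1 ≠ 0 := by linarith
  have key : ∫ y in (0:ℝ)..1, y ^ p = 1 / (p + 1) := by
    rw [integral_rpow (Or.inl hp)]
    rw [Real.one_rpow, Real.zero_rpow hp1]; ring
  have h1' : IntervalIntegrable (fun y : ℝ => |y| ^ p) volume 0 1 := by
    have h1 : IntervalIntegrable (fun y : ℝ => y ^ p) volume 0 1 :=
      intervalIntegral.intervalIntegrable_rpow' hp
    refine h1.congr_ae ?_
    filter_upwards [MeasureTheory.ae_restrict_mem measurableSet_uIoc] with y hy
    rw [Set.uIoc_of_le (by norm_num : (0:ℝ) ≤ 1)] at hy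
    rw [abs_of_nonneg hy.1.le]
  have h2' : IntervalIntegrable (fun y : ℝ => |y| ^ p) volume (-1) 0 :=
    (abs_rpow_intervalIntegrable hp).mono_set (by
      rw [Set.uIcc_of_le (by norm_num : (-1:ℝ) ≤ 0), Set.uIcc_of_le (by norm_num : (-1:ℝ) ≤ 1)]
      exact Set.Icc_subset_Icc le_rfl (by norm_num))
  rw [← intervalIntegral.integral_add_adjacent_intervals h2' h1']
  have e1 : ∫ y in (0:ℝ)..1, |y| ^ p = 1 / (p + 1) := by
    rw [← key]
    refine intervalIntegral.integral_congr fun y hy => ?_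
    rw [Set.uIcc_of_le (by norm_num : (0:ℝ) ≤ 1)] at hy
    rw [abs_of_nonneg hy.1]
  have e2 : ∫ y in (-1:ℝ)..0, |y| ^ p = 1 / (p + 1) := by
    have : ∫ y in (-1:ℝ)..0, |y| ^ p = ∫ y in (-1:ℝ)..0, (-y) ^ p := by
      refine intervalIntegral.integral_congr fun y hy => ?_
      rw [Set.uIcc_of_le (by norm_num : (-1:ℝ) ≤ 0)] at hy
      rw [abs_of_nonpos hy.2]
    rw [this, intervalIntegral.integral_comp_neg (fun y : ℝ => y ^ p)]
    simpa using key
  rw [e1, e2]; ring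

/-- Equation (3.10): if `0 < α(x)` for all `x` and `sup_x α(x) < 2`, then
`α(x)(1+x)^{α(x)} ∫_{−1}^1 (ln(1+y/(1+x)) − y/(1+x)) |y|^{−α(x)−1} dy → 0`
as `x → ∞`. -/
theorem stmt_5 (α : ℝ → ℝ) (hα : ∀ x, 0 < α x)
    (hsup : ∃ M : ℝ, M < 2 ∧ ∀ x, α x ≤ M) :
    Tendsto
      (fun x : ℝ => α x * (1 + x) ^ (α x) *
        ∫ y in (-1:ℝ)..1,
          (Real.log (1 + y / (1 + x)) - y / (1 + x)) * |y| ^ (-(α x) - 1))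
      atTop (nhds 0) := by
  obtain ⟨M, hM2, hMb⟩ := hsup
  have hM0 : 0 < M := lt_of_lt_of_le (hα 0) (hMb 0)
  set C : ℝ := 4 * M / (2 - M) with hC
  have hg : Tendsto (fun x : ℝ => C * (1 + x) ^ (M - 2)) atTop (nhds 0) := by
    have h1 : Tendsto (fun x : ℝ => 1 + x) atTop atTop :=
      tendsto_atTop_add_const_left atTop 1 tendsto_id
    have h2 : Tendsto (fun z : ℝ => z ^ (-(2 - M))) atTop (nhds 0) :=
      tendsto_rpow_neg_atTop (by linarith)
    have h3 : Tendsto (fun x : ℝ => (1 + x) ^ (M - 2)) atTop (nhds 0) := by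
      have := h2.comp h1
      simpa [Function.comp_def] using this
    simpa using h3.const_mul C
  apply squeeze_zero_norm' _ hg
  filter_upwards [eventually_ge_atTop (1:ℝ)] with x hx1
  set A := α x with hA
  have hA0 : 0 < A := hα x
  have hAM : A ≤ M := hMb x
  have hA2 : A < 2 := lt_of_le_of_lt hAM hM2
  have hx0 : (0:ℝ) < 1 + x := by linarith
  have hx2 : (2:ℝ) ≤ 1 + x := by linarith
  have hp : (-1:ℝ) < 1 - A := by linarith
  -- pointwise bound
  have hbound : ∀ y ∈ Set.uIoc (-1:ℝ) 1,
      ‖(Real.log (1 + y / (1 + x)) - y / (1 + x)) * |y| ^ (-A - 1)‖ ≤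
        (2 / (1 + x) ^ 2) * |y| ^ (1 - A) := by
    intro y hy
    rw [Set.uIoc_of_le (by norm_num : (-1:ℝ) ≤ 1)] at hy
    have hyabs : |y| ≤ 1 := abs_le.mpr ⟨hy.1.le, hy.2⟩
    by_cases hy0 : y = 0
    · subst hy0
      simp only [zero_div, add_zero, Real.log_one, sub_zero, zero_mul, norm_zero]
      positivity
    · have hyp : 0 < |y| := abs_pos.mpr hy0
      set u : ℝ := y / (1 + x) with hu
      have hule : |u| ≤ 1 / 2 := by
        rw [hu, abs_div, abs_of_pos hx0]
        rw [div_le_div_iff₀ hx0 (by norm_num)]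
        nlinarith [abs_nonneg y]
      have hult : |(-u)| < 1 := by rw [abs_neg]; linarith
      have key := Real.abs_log_sub_add_sum_range_le hult 1
      simp only [Finset.sum_range_one, pow_one, Nat.cast_zero, zero_add, div_one,
        sub_neg_eq_add, abs_neg] at key
      -- key : |(-u) + log (1 + u)| ≤ |u| ^ 2 / (1 - |u|)
      have hlog : |Real.log (1 + u) - u| ≤ 2 * u ^ 2 := by
        have h1 : |Real.log (1 + u) - u| ≤ u ^ 2 / (1 - |u|) := by
          have e : -u + Real.log (1 + u) = Real.log (1 + u) - u := by ring
          rw [e] at key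
          norm_num at key
          exact key
        have h2 : u ^ 2 / (1 - |u|) ≤ 2 * u ^ 2 := by
          rw [div_le_iff₀ (by linarith : (0:ℝ) < 1 - |u|)]
          nlinarith [sq_nonneg u, abs_nonneg u]
        linarith
      rw [norm_mul, Real.norm_eq_abs, Real.norm_eq_abs,
        abs_of_nonneg (Real.rpow_nonneg (abs_nonneg y) _)]
      have hstep : |Real.log (1 + u) - u| * |y| ^ (-A - 1) ≤
          2 * u ^ 2 * |y| ^ (-A - 1) := by
        apply mul_le_mul_of_nonneg_right hlog (Real.rpow_nonneg (abs_nonneg y) _)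
      refine le_trans hstep ?_
      have hu2 : u ^ 2 = y ^ 2 / (1 + x) ^ 2 := by rw [hu, div_pow]
      have hrpow : |y| ^ (2:ℝ) * |y| ^ (-A - 1) = |y| ^ (1 - A) := by
        rw [← Real.rpow_add hyp]; ring_nf
      have hy2 : y ^ 2 = |y| ^ (2:ℝ) := by
        rw [show ((2:ℝ)) = ((2:ℕ):ℝ) by norm_num, Real.rpow_natCast, sq_abs]
      rw [hu2, hy2]
      calc 2 * (|y| ^ (2:ℝ) / (1 + x) ^ 2) * |y| ^ (-A - 1)
          = (2 / (1 + x) ^ 2) * (|y| ^ (2:ℝ) * |y| ^ (-A - 1)) := by ring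
        _ = (2 / (1 + x) ^ 2) * |y| ^ (1 - A) := by rw [hrpow]
        _ ≤ (2 / (1 + x) ^ 2) * |y| ^ (1 - A) := le_rfl
  have hgint : IntervalIntegrable (fun y : ℝ => (2 / (1 + x) ^ 2) * |y| ^ (1 - A))
      volume (-1) 1 := (abs_rpow_intervalIntegrable hp).const_mul _
  have hInorm : ‖∫ y in (-1:ℝ)..1,
      (Real.log (1 + y / (1 + x)) - y / (1 + x)) * |y| ^ (-A - 1)‖ ≤
      (2 / (1 + x) ^ 2) * (2 / (2 - A)) := by
    have hae : ∀ᵐ t ∂(volume.restrict (Set.uIoc (-1:ℝ) 1)),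
        ‖(Real.log (1 + t / (1 + x)) - t / (1 + x)) * |t| ^ (-A - 1)‖ ≤
          (2 / (1 + x) ^ 2) * |t| ^ (1 - A) := by
      filter_upwards [MeasureTheory.ae_restrict_mem measurableSet_uIoc] with y hy
      exact hbound y hy
    have h := intervalIntegral.norm_integral_le_abs_of_norm_le hae hgint
    have hval : ∫ y in (-1:ℝ)..1, (2 / (1 + x) ^ 2) * |y| ^ (1 - A)
        = (2 / (1 + x) ^ 2) * (2 / (2 - A)) := by
      rw [intervalIntegral.integral_const_mul, abs_rpow_integral hp]
      ring_nf
    rw [hval] at h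
    refine h.trans (le_of_eq (abs_of_nonneg ?_))
    have : (0:ℝ) < 2 - A := by linarith
    positivity
  -- assemble
  rw [norm_mul, norm_mul, Real.norm_eq_abs, Real.norm_eq_abs,
    abs_of_pos hA0, abs_of_nonneg (Real.rpow_nonneg hx0.le _)]
  have hstep2 : A * (1 + x) ^ A *
      ‖∫ y in (-1:ℝ)..1, (Real.log (1 + y / (1 + x)) - y / (1 + x)) * |y| ^ (-A - 1)‖ ≤
      A * (1 + x) ^ A * ((2 / (1 + x) ^ 2) * (2 / (2 - A))) := by
    apply mul_le_mul_of_nonneg_left hInorm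
    positivity
  refine hstep2.trans ?_
  have hid : A * (1 + x) ^ A * ((2 / (1 + x) ^ 2) * (2 / (2 - A)))
      = (4 * A / (2 - A)) * (1 + x) ^ (A - 2) := by
    have hpow2 : ((1 + x) ^ 2 : ℝ) = (1 + x) ^ (2:ℝ) := by
      rw [← Real.rpow_natCast (1 + x) 2]; norm_num
    have hsub : (1 + x) ^ (A - 2) = (1 + x) ^ A / (1 + x) ^ (2:ℝ) :=
      Real.rpow_sub hx0 A 2
    rw [hsub, ← hpow2]
    have h2A : (2 - A) ≠ 0 := by linarith
    have hne : ((1 + x) ^ 2 : ℝ) ≠ 0 := by positivity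
    field_simp
    ring
  rw [hid]
  have h1x : (1:ℝ) ≤ 1 + x := by linarith
  have hle1 : 4 * A / (2 - A) ≤ C := by
    rw [hC]
    apply div_le_div₀ (by positivity) (by linarith) (by linarith) (by linarith)
  have hle2 : (1 + x) ^ (A - 2) ≤ (1 + x) ^ (M - 2) :=
    Real.rpow_le_rpow_of_exponent_le h1x (by linarith)
  apply mul_le_mul hle1 hle2 (Real.rpow_nonneg hx0.le _) (div_nonneg (by positivity) (by linarith))
end

section
/- For every α ∈ (0,2) and every real x ≥ 1, −(2/(2−α))·(1+x)^{−2} ≤ ∫_{−1}^1 ( ln(1 + y/(1+x)) − y/(1+x) ) · |y|^{−α−1} dy ≤ 0. -/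
open Real MeasureTheory

lemma stmt6_log_bounds {t : ℝ} (ht : |t| ≤ 1/2) :
    t - t^2 ≤ Real.log (1+t) ∧ Real.log (1+t) ≤ t := by
  obtain ⟨h1, h2⟩ := abs_le.1 ht
  have h0 : (0:ℝ) < 1 + t := by linarith
  constructor
  · rw [Real.le_log_iff_exp_le h0]
    rcases le_or_gt 0 t with htp | htn
    · set v := t - t^2 with hv
      have hE : (-v) + 1 ≤ Real.exp (-v) := Real.add_one_le_exp _
      have h3 : Real.exp v * ((-v) + 1) ≤ Real.exp v * Real.exp (-v) :=
        mul_le_mul_of_nonneg_left hE (Real.exp_pos v).le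
      rw [← Real.exp_add] at h3
      simp only [add_neg_cancel, Real.exp_zero] at h3
      have h4 : 1 ≤ (1+t)*(1 - v) := by nlinarith
      have h5 : 0 < 1 - v := by nlinarith
      nlinarith [Real.exp_pos v]
    · set u := t^2 - t with hu
      have hu0 : 0 ≤ u := by nlinarith
      have hsum : 1 + u + u^2/2 ≤ Real.exp u := by
        have h := Real.sum_le_exp_of_nonneg hu0 3
        simp [Finset.sum_range_succ, Nat.factorial] at h
        nlinarith [h]
      have hEE : Real.exp (t - t^2) * Real.exp u = 1 := by
        rw [← Real.exp_add]; simp [hu]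
      have hpoly : 1 ≤ (1+t) * (1 + u + u^2/2) := by nlinarith [sq_nonneg t, sq_nonneg (t*t)]
      have h5 : 1 ≤ (1+t) * Real.exp u := by nlinarith
      nlinarith [Real.exp_pos u]
  · have := Real.log_le_sub_one_of_pos h0
    linarith

/-- For every `α ∈ (0,2)` and every `x ≥ 1`,
`−(2/(2−α))(1+x)^{−2} ≤ ∫_{−1}^1 (ln(1+y/(1+x)) − y/(1+x)) |y|^{−α−1} dy ≤ 0`. -/
theorem stmt_6 (α : ℝ) (hα : α ∈ Set.Ioo (0:ℝ) 2) (x : ℝ) (hx : 1 ≤ x) :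
    -(2 / (2 - α)) * (1 + x) ^ (-2 : ℝ) ≤
      (∫ y in (-1:ℝ)..1,
        (Real.log (1 + y / (1 + x)) - y / (1 + x)) * |y| ^ (-α - 1)) ∧
    (∫ y in (-1:ℝ)..1,
        (Real.log (1 + y / (1 + x)) - y / (1 + x)) * |y| ^ (-α - 1)) ≤ 0 := by
  obtain ⟨hα0, hα2⟩ := hα
  have h1x : (0:ℝ) < 1 + x := by linarith
  set F : ℝ → ℝ := fun y => (Real.log (1 + y / (1 + x)) - y / (1 + x)) * |y| ^ (-α - 1)
    with hFdef
  have ht : ∀ y : ℝ, |y| ≤ 1 → |y / (1+x)| ≤ 1/2 := by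
    intro y hy
    rw [abs_div, abs_of_pos h1x, div_le_iff₀ h1x]
    nlinarith
  have hpow2 : (1+x) ^ (-2:ℝ) = ((1+x)^2)⁻¹ := by
    rw [Real.rpow_neg h1x.le, ← Real.rpow_natCast (1+x) 2]
    norm_num
  have key : ∀ y : ℝ, y ≠ 0 → y^2 * |y| ^ (-α - 1) = |y| ^ (1 - α) := by
    intro y hy
    have h0 : 0 < |y| := abs_pos.2 hy
    have habs2 : |y| ^ (2:ℝ) = y^2 := by
      rw [show (2:ℝ) = ((2:ℕ):ℝ) by norm_num, Real.rpow_natCast, sq_abs]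
    calc y^2 * |y| ^ (-α-1) = |y| ^ (2:ℝ) * |y| ^ (-α-1) := by rw [habs2]
      _ = |y| ^ ((2:ℝ) + (-α-1)) := (Real.rpow_add h0 _ _).symm
      _ = |y| ^ (1-α) := by ring_nf
  -- pointwise bounds on Icc
  have hub : ∀ y ∈ Set.Icc (-1:ℝ) 1, F y ≤ 0 := by
    intro y hy
    have hy1 : |y| ≤ 1 := abs_le.2 ⟨hy.1, hy.2⟩
    have hlog := (stmt6_log_bounds (ht y hy1)).2
    have hb : 0 ≤ |y| ^ (-α-1) := Real.rpow_nonneg (abs_nonneg y) _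
    have : Real.log (1 + y/(1+x)) - y/(1+x) ≤ 0 := by linarith
    exact mul_nonpos_iff.2 (Or.inr ⟨this, hb⟩)
  have hlb : ∀ y ∈ Set.Icc (-1:ℝ) 1,
      -((1+x) ^ (-2:ℝ)) * |y| ^ (1-α) ≤ F y := by
    intro y hy
    have hy1 : |y| ≤ 1 := abs_le.2 ⟨hy.1, hy.2⟩
    have hb : 0 ≤ |y| ^ (-α-1) := Real.rpow_nonneg (abs_nonneg y) _
    have hb' : 0 ≤ |y| ^ (1-α) := Real.rpow_nonneg (abs_nonneg y) _
    rcases eq_or_ne y 0 with rfl | hy0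
    · have : F 0 = 0 := by simp [hFdef]
      rw [this]
      have : 0 < (1+x) ^ (-2:ℝ) := Real.rpow_pos_of_pos h1x _
      nlinarith
    · have hlog := (stmt6_log_bounds (ht y hy1)).1
      have h2 : -((y/(1+x))^2) ≤ Real.log (1 + y/(1+x)) - y/(1+x) := by linarith
      calc -((1+x) ^ (-2:ℝ)) * |y| ^ (1-α)
          = -((y/(1+x))^2) * |y| ^ (-α-1) := by
            rw [hpow2, ← key y hy0, div_pow]; ring
        _ ≤ F y := mul_le_mul_of_nonneg_right h2 hb
  -- integrability of |y|^(1-α)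
  have h01int : IntervalIntegrable (fun y : ℝ => |y| ^ (1-α)) volume 0 1 := by
    rw [intervalIntegrable_iff_integrableOn_Ioc_of_le zero_le_one]
    have h := intervalIntegral.intervalIntegrable_rpow' (a := 0) (b := 1)
      (r := 1-α) (by linarith)
    rw [intervalIntegrable_iff_integrableOn_Ioc_of_le zero_le_one] at h
    exact h.congr_fun (fun y hy => by rw [abs_of_nonneg hy.1.le]) measurableSet_Ioc
  have hnegint : IntervalIntegrable (fun y : ℝ => |y| ^ (1-α)) volume (-1) 0 := by
    rw [IntervalIntegrable.iff_comp_neg]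
    simp only [abs_neg, neg_neg, neg_zero]
    exact h01int.symm
  have habs : IntervalIntegrable (fun y : ℝ => |y| ^ (1-α)) volume (-1) 1 :=
    hnegint.trans h01int
  -- value of the integral
  have h01 : ∫ y in (0:ℝ)..1, |y| ^ (1-α) = 1/(2-α) := by
    rw [intervalIntegral.integral_congr (g := fun y : ℝ => y ^ (1-α))
      (fun y hy => by
        rw [Set.uIcc_of_le zero_le_one] at hy
        simp [abs_of_nonneg hy.1])]
    rw [integral_rpow (Or.inl (by linarith))]
    rw [Real.one_rpow, Real.zero_rpow (by intro h; linarith [h]; )]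
    · norm_num
      ring_nf
  have hneg : ∫ y in (-1:ℝ)..0, |y| ^ (1-α) = ∫ y in (0:ℝ)..1, |y| ^ (1-α) := by
    have h := intervalIntegral.integral_comp_neg (a := (0:ℝ)) (b := 1)
      (f := fun y : ℝ => |y| ^ (1-α))
    simp only [abs_neg, neg_zero] at h
    exact h.symm
  have hIval : ∫ y in (-1:ℝ)..1, |y| ^ (1-α) = 2/(2-α) := by
    rw [← intervalIntegral.integral_add_adjacent_intervals hnegint h01int, hneg, h01]
    ring
  -- integrability of F
  have hFmeas : Measurable F := by
    apply Measurable.mul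
    · exact (Real.measurable_log.comp (by fun_prop)).sub (by fun_prop)
    · exact measurable_abs.pow_const _
  have hFint : IntervalIntegrable F volume (-1) 1 := by
    rw [intervalIntegrable_iff_integrableOn_Ioc_of_le (by norm_num)]
    have hg : IntegrableOn (fun y : ℝ => (1+x) ^ (-2:ℝ) * |y| ^ (1-α))
        (Set.Ioc (-1:ℝ) 1) := by
      rw [← intervalIntegrable_iff_integrableOn_Ioc_of_le (by norm_num)]
      exact habs.const_mul _
    refine MeasureTheory.Integrable.mono hg hFmeas.aestronglyMeasurable ?_
    rw [ae_restrict_iff' measurableSet_Ioc]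
    filter_upwards with y
    intro hy
    have hy1 : |y| ≤ 1 := abs_le.2 ⟨hy.1.le, hy.2⟩
    have hb : 0 ≤ |y| ^ (-α-1) := Real.rpow_nonneg (abs_nonneg y) _
    rcases eq_or_ne y 0 with rfl | hy0
    · have : F 0 = 0 := by simp [hFdef]
      rw [this]
      simp only [norm_zero, Real.norm_eq_abs]
      positivity
    · obtain ⟨hlog1, hlog2⟩ := stmt6_log_bounds (ht y hy1)
      have h2 : |Real.log (1 + y/(1+x)) - y/(1+x)| ≤ (y/(1+x))^2 :=
        abs_le.2 ⟨by linarith, by nlinarith [sq_nonneg (y/(1+x))]⟩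
      have hFy : ‖F y‖ = |Real.log (1 + y/(1+x)) - y/(1+x)| * |y| ^ (-α-1) := by
        rw [hFdef]
        simp only [Real.norm_eq_abs, abs_mul, abs_of_nonneg hb]
      rw [hFy]
      calc |Real.log (1 + y/(1+x)) - y/(1+x)| * |y| ^ (-α-1)
          ≤ (y/(1+x))^2 * |y| ^ (-α-1) := mul_le_mul_of_nonneg_right h2 hb
        _ = (1+x) ^ (-2:ℝ) * |y| ^ (1-α) := by
            rw [hpow2, ← key y hy0, div_pow]; ring
        _ ≤ ‖(1+x) ^ (-2:ℝ) * |y| ^ (1-α)‖ := le_abs_self _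
  have hGint : IntervalIntegrable (fun y : ℝ => -((1+x) ^ (-2:ℝ)) * |y| ^ (1-α))
      volume (-1) 1 := habs.const_mul _
  constructor
  · have hmono := intervalIntegral.integral_mono_on (by norm_num : (-1:ℝ) ≤ 1)
      hGint hFint hlb
    calc -(2/(2-α)) * (1+x) ^ (-2:ℝ)
        = -((1+x) ^ (-2:ℝ)) * (2/(2-α)) := by ring
      _ = ∫ y in (-1:ℝ)..1, -((1+x) ^ (-2:ℝ)) * |y| ^ (1-α) := by
          rw [intervalIntegral.integral_const_mul, hIval]
      _ ≤ ∫ y in (-1:ℝ)..1, F y := hmono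
  · have hmono := intervalIntegral.integral_mono_on (by norm_num : (-1:ℝ) ≤ 1)
      hFint (intervalIntegrable_const (c := (0:ℝ))) hub
    simpa using hmono
end

section
/- Let α : ℝ → ℝ satisfy 0 < α(x) and sup_{x∈ℝ} α(x) < 2. Then lim_{x→∞} Σ_{n=1}^∞ ( (1−2α(x)) / ((α(x)+n)(1−α(x)+n)) ) · ( ((x−1)/(x+1))^n − 1 ) = 0. -/
open Filter Real

/-- Equation (3.20): if `0 < α(x)` and `sup_x α(x) < 2`, then
`∑_{n=1}^∞ ((1−2α(x))/((α(x)+n)(1−α(x)+n))) (((x−1)/(x+1))^n − 1) → 0`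
as `x → ∞`. -/
theorem stmt_9 (α : ℝ → ℝ) (hα : ∀ x, 0 < α x)
    (hsup : ∃ M : ℝ, M < 2 ∧ ∀ x, α x ≤ M) :
    Tendsto
      (fun x : ℝ => ∑' n : ℕ,
        ((1 - 2 * α x) / ((α x + (n + 1)) * (1 - α x + (n + 1)))) *
          (((x - 1) / (x + 1)) ^ (n + 1) - 1))
      atTop (nhds 0) := by
  obtain ⟨M, hM2, hMle⟩ := hsup
  set M' := max M 1 with hM'
  have hM'2 : M' < 2 := max_lt hM2 one_lt_two
  have hM'1 : (1:ℝ) ≤ M' := le_max_right _ _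
  have hle : ∀ x, α x ≤ M' := fun x => (hMle x).trans (le_max_left _ _)
  set δ := 2 - M' with hδ
  have hδ0 : 0 < δ := by simp only [hδ]; linarith
  have hδ1 : δ ≤ 1 := by simp only [hδ]; linarith
  -- bound on the coefficient
  have key : ∀ x, ∀ n : ℕ,
      |(1 - 2 * α x) / ((α x + ((n:ℝ) + 1)) * (1 - α x + ((n:ℝ) + 1)))|
        ≤ (1 + 2 * M') / (δ * ((n:ℝ) + 1) ^ 2) := by
    intro x n
    have ha := hα x
    have ha2 := hle x
    have hn : (0:ℝ) ≤ (n:ℝ) := Nat.cast_nonneg n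
    have hpos1 : (0:ℝ) < α x + ((n:ℝ) + 1) := by linarith
    have hpos2 : (0:ℝ) < 1 - α x + ((n:ℝ) + 1) := by linarith
    have hdpos : (0:ℝ) < (α x + ((n:ℝ) + 1)) * (1 - α x + ((n:ℝ) + 1)) :=
      mul_pos hpos1 hpos2
    rw [abs_div, abs_of_pos hdpos]
    apply div_le_div₀ (by linarith)
    · rw [abs_le]; constructor <;> linarith
    · positivity
    · have h2 : δ * ((n:ℝ) + 1) ≤ 1 - α x + ((n:ℝ) + 1) := by nlinarith
      calc δ * ((n:ℝ) + 1) ^ 2 = ((n:ℝ) + 1) * (δ * ((n:ℝ) + 1)) := by ring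
        _ ≤ (α x + ((n:ℝ) + 1)) * (1 - α x + ((n:ℝ) + 1)) :=
          mul_le_mul (by linarith) h2 (by positivity) hpos1.le
  -- the dominating series is summable
  have hsum : Summable (fun n : ℕ => (1 + 2 * M') / (δ * ((n:ℝ) + 1) ^ 2)) := by
    have h := Real.summable_one_div_nat_pow.mpr (show 1 < 2 by norm_num)
    have h1 : Summable (fun n : ℕ => 1 / ((n:ℝ) + 1) ^ 2) := by
      refine ((summable_nat_add_iff 1).mpr h).congr fun n => ?_
      push_cast; ring
    refine (h1.mul_left ((1 + 2 * M') / δ)).congr fun n => ?_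
    field_simp
  -- r(x) = (x-1)/(x+1) → 1
  have hr : Tendsto (fun x : ℝ => (x - 1) / (x + 1)) atTop (nhds 1) := by
    have h : Tendsto (fun x : ℝ => 1 - 2 / (x + 1)) atTop (nhds (1 - 0)) :=
      tendsto_const_nhds.sub (Tendsto.div_atTop tendsto_const_nhds
        (tendsto_atTop_add_const_right _ 1 tendsto_id))
    rw [sub_zero] at h
    refine h.congr' ?_
    filter_upwards [eventually_gt_atTop (-1:ℝ)] with x hx
    have : x + 1 ≠ 0 := by linarith
    field_simp; ring
  have main := tendsto_tsum_of_dominated_convergence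
    (f := fun (x : ℝ) (n : ℕ) =>
      ((1 - 2 * α x) / ((α x + ((n:ℝ) + 1)) * (1 - α x + ((n:ℝ) + 1)))) *
        (((x - 1) / (x + 1)) ^ (n + 1) - 1))
    (g := fun _ : ℕ => (0:ℝ))
    (bound := fun n : ℕ => (1 + 2 * M') / (δ * ((n:ℝ) + 1) ^ 2))
    hsum
    (by
      intro k
      -- each term tends to 0
      have h1 : Tendsto (fun x : ℝ => ((x - 1) / (x + 1)) ^ (k + 1) - 1)
          atTop (nhds 0) := by
        have := (hr.pow (k + 1)).sub (tendsto_const_nhds (x := (1:ℝ)))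
        simpa using this
      have h2 : Tendsto (fun x : ℝ =>
          ((1 + 2 * M') / (δ * ((k:ℝ) + 1) ^ 2)) *
            |((x - 1) / (x + 1)) ^ (k + 1) - 1|) atTop (nhds 0) := by
        have := h1.abs.const_mul ((1 + 2 * M') / (δ * ((k:ℝ) + 1) ^ 2))
        simpa using this
      refine squeeze_zero_norm (fun x => ?_) h2
      calc ‖((1 - 2 * α x) / ((α x + ((k:ℝ) + 1)) * (1 - α x + ((k:ℝ) + 1)))) *
            (((x - 1) / (x + 1)) ^ (k + 1) - 1)‖
          = |(1 - 2 * α x) / ((α x + ((k:ℝ) + 1)) * (1 - α x + ((k:ℝ) + 1)))| *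
            |((x - 1) / (x + 1)) ^ (k + 1) - 1| := abs_mul _ _
        _ ≤ ((1 + 2 * M') / (δ * ((k:ℝ) + 1) ^ 2)) *
            |((x - 1) / (x + 1)) ^ (k + 1) - 1| :=
          mul_le_mul_of_nonneg_right (key x k) (abs_nonneg _))
    (by
      filter_upwards [eventually_ge_atTop (1:ℝ)] with x hx k
      have hrx0 : 0 ≤ (x - 1) / (x + 1) := by
        apply div_nonneg <;> linarith
      have hrx1 : (x - 1) / (x + 1) ≤ 1 := by
        rw [div_le_one (by linarith)]; linarith
      have hp0 : 0 ≤ ((x - 1) / (x + 1)) ^ (k + 1) := pow_nonneg hrx0 _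
      have hp1 : ((x - 1) / (x + 1)) ^ (k + 1) ≤ 1 := pow_le_one₀ hrx0 hrx1
      calc ‖((1 - 2 * α x) / ((α x + ((k:ℝ) + 1)) * (1 - α x + ((k:ℝ) + 1)))) *
            (((x - 1) / (x + 1)) ^ (k + 1) - 1)‖
          = |(1 - 2 * α x) / ((α x + ((k:ℝ) + 1)) * (1 - α x + ((k:ℝ) + 1)))| *
            |((x - 1) / (x + 1)) ^ (k + 1) - 1| := abs_mul _ _
        _ ≤ ((1 + 2 * M') / (δ * ((k:ℝ) + 1) ^ 2)) * 1 := by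
            apply mul_le_mul (key x k) ?_ (abs_nonneg _) ?_
            · rw [abs_le]; constructor <;> linarith
            · positivity
        _ = (1 + 2 * M') / (δ * ((k:ℝ) + 1) ^ 2) := mul_one _)
  simpa using main
end

section
/- Let α : ℝ → ℝ satisfy α(x) ∈ (0,1) ∪ (1,2) for all x, 0 < inf_{x∈ℝ} α(x) and sup_{x∈ℝ} α(x) < 2. For x > 1 set F(x) := Σ_{n=0}^∞ ( (1−α(x)) / (1−α(x)+n) ) · ((x−1)/(x+1))^n. Then lim_{x→∞} ( F(x)/(α(x)−1) ) · ( ((x+1)/(x−1))^{α(x)−1} − 1 ) = 0. -/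
open Filter Real Set

private lemma aux_abs_exp_sub_one (u : ℝ) : |Real.exp u - 1| ≤ |u| * Real.exp |u| := by
  rcases le_or_gt 0 u with h | h
  · rw [abs_of_nonneg h, abs_of_nonneg (by linarith [Real.one_le_exp h] : (0:ℝ) ≤ Real.exp u - 1)]
    have key : Real.exp (-u) * Real.exp u = 1 := by rw [← Real.exp_add]; simp
    nlinarith [Real.add_one_le_exp (-u), Real.exp_pos u]
  · have hlt : Real.exp u < 1 := by
      calc Real.exp u < Real.exp 0 := Real.exp_lt_exp.mpr h
        _ = 1 := Real.exp_zero
    rw [abs_of_neg h, abs_of_nonpos (by linarith : Real.exp u - 1 ≤ 0)]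
    have h1 : u + 1 ≤ Real.exp u := Real.add_one_le_exp u
    have h2 : (1:ℝ) ≤ Real.exp (-u) := Real.one_le_exp (by linarith)
    nlinarith

private lemma aux_series_bound {β t δ : ℝ} (hβ : β ≠ 0) (hβ1 : |β| ≤ 1) (ht0 : 0 < t)
    (ht1 : t < 1) (hδ0 : 0 < δ) (hδ1 : δ ≤ 1) (hδβ : δ ≤ β + 1) :
    |∑' n : ℕ, (β / (β + n)) * t ^ n| ≤ 1 + (-Real.log (1 - t)) / δ := by
  -- the comparison sequence
  set k : ℕ → ℝ := fun n => t ^ n / (δ * n) with hk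
  have hkS : HasSum k ((-Real.log (1 - t)) / δ) := by
    have h0 : HasSum (fun n : ℕ => t ^ (n + 1) / (n + 1)) (-Real.log (1 - t)) :=
      Real.hasSum_pow_div_log_of_abs_lt_one (by rw [abs_of_pos ht0]; exact ht1)
    have h1 : HasSum (fun n : ℕ => k (n + 1)) ((-Real.log (1 - t)) / δ) := by
      have := h0.div_const δ
      refine this.congr_fun fun n => ?_
      simp only [hk]
      push_cast
      rw [div_div, mul_comm]
    have h2 := (hasSum_nat_add_iff (f := k) 1).mp h1
    simpa [hk] using h2
  have hb : HasSum (fun n : ℕ => (if n = 0 then (1:ℝ) else 0) + k n)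
      (1 + (-Real.log (1 - t)) / δ) := (hasSum_ite_eq 0 1).add hkS
  have hβlt : -1 < β := by
    have := abs_le.mp hβ1; linarith
  have hpt : ∀ n : ℕ, |(β / (β + n)) * t ^ n| ≤ (if n = 0 then (1:ℝ) else 0) + k n := by
    intro n
    obtain _ | m := n
    · simp [div_self hβ, hk]
    · have hmnn : (0:ℝ) ≤ (m:ℝ) := Nat.cast_nonneg m
      have hn1 : (1:ℝ) ≤ ((m:ℝ) + 1) := by linarith
      have hδn : δ * ((m:ℝ)+1) ≤ β + ((m:ℝ)+1) := by nlinarith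
      have hδn0 : 0 < δ * ((m:ℝ)+1) := by positivity
      have hβn0 : 0 < β + ((m:ℝ)+1) := lt_of_lt_of_le hδn0 hδn
      have htn : 0 ≤ t ^ (m+1) := by positivity
      simp only [if_neg (Nat.succ_ne_zero m), zero_add, hk]
      push_cast
      rw [abs_mul, abs_div, abs_of_pos hβn0, abs_pow, abs_of_pos ht0]
      calc |β| / (β + ((m:ℝ)+1)) * t ^ (m+1)
          ≤ 1 / (δ * ((m:ℝ)+1)) * t ^ (m+1) := by
            apply mul_le_mul_of_nonneg_right _ htn
            exact div_le_div₀ zero_le_one hβ1 hδn0 hδn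
        _ = t ^ (m+1) / (δ * ((m:ℝ)+1)) := by ring
  have hsum : Summable (fun n : ℕ => |(β / (β + n)) * t ^ n|) :=
    Summable.of_nonneg_of_le (fun n => abs_nonneg _) hpt hb.summable
  have hsum' : Summable (fun n : ℕ => ‖(β / (β + (n:ℝ))) * t ^ n‖) := by
    simpa only [Real.norm_eq_abs] using hsum
  have habs : |∑' n : ℕ, (β / (β + n)) * t ^ n| ≤ ∑' n : ℕ, |(β / (β + n)) * t ^ n| := by
    simpa only [Real.norm_eq_abs] using norm_tsum_le_tsum_norm hsum'
  calc |∑' n : ℕ, (β / (β + n)) * t ^ n| ≤ ∑' n : ℕ, |(β / (β + n)) * t ^ n| := habs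
    _ ≤ ∑' n : ℕ, ((if n = 0 then (1:ℝ) else 0) + k n) := Summable.tsum_le_tsum hpt hsum hb.summable
    _ = 1 + (-Real.log (1 - t)) / δ := hb.tsum_eq

/-- Equation (3.19): with `α(x) ∈ (0,1) ∪ (1,2)`, `inf α > 0`, `sup α < 2`,
and `F(x) = ∑_{n=0}^∞ ((1−α(x))/(1−α(x)+n)) ((x−1)/(x+1))^n` (for `x > 1`),
one has `(F(x)/(α(x)−1)) (((x+1)/(x−1))^{α(x)−1} − 1) → 0` as `x → ∞`. -/
theorem stmt_10 (α : ℝ → ℝ)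
    (hα : ∀ x, α x ∈ Ioo (0:ℝ) 1 ∪ Ioo (1:ℝ) 2)
    (hinf : ∃ m : ℝ, 0 < m ∧ ∀ x, m ≤ α x)
    (hsup : ∃ M : ℝ, M < 2 ∧ ∀ x, α x ≤ M) :
    Tendsto
      (fun x : ℝ =>
        ((∑' n : ℕ, ((1 - α x) / (1 - α x + n)) * ((x - 1) / (x + 1)) ^ n)
            / (α x - 1)) *
          (((x + 1) / (x - 1)) ^ (α x - 1) - 1))
      atTop (nhds 0) := by
  obtain ⟨M, hM2, hMle⟩ := hsup
  set δ : ℝ := min (2 - M) 1 with hδ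
  have hδ0 : 0 < δ := lt_min (by linarith) one_pos
  have hδ1 : δ ≤ 1 := min_le_right _ _
  -- the squeezing function
  set g : ℝ → ℝ := fun x =>
    ((1 + Real.log ((x + 1) / 2) / δ) / ((x + 1) / 2)) * ((x + 1) / (x - 1)) ^ 2 with hg
  apply squeeze_zero_norm' (a := g)
  · -- eventual bound
    filter_upwards [eventually_gt_atTop 1] with x hx
    have hx1 : 0 < x - 1 := by linarith
    have hx2 : 0 < x + 1 := by linarith
    -- basic facts about α x
    have hαx : 0 < α x ∧ α x < 2 ∧ α x ≠ 1 := by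
      rcases hα x with h | h
      · exact ⟨h.1, by linarith [h.2], ne_of_lt h.2⟩
      · exact ⟨by linarith [h.1], h.2, ne_of_gt h.1⟩
    set β : ℝ := 1 - α x with hβdef
    have hβ : β ≠ 0 := by simp only [hβdef]; intro h; exact hαx.2.2 (by linarith [sub_eq_zero.mp h])
    have hβ1 : |β| ≤ 1 := abs_le.mpr
      ⟨by simp only [hβdef]; linarith [hαx.2.1], by simp only [hβdef]; linarith [hαx.1]⟩
    have hδβ : δ ≤ β + 1 := by
      have := hMle x
      calc δ ≤ 2 - M := min_le_left _ _
        _ ≤ β + 1 := by simp only [hβdef]; linarith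
    set t : ℝ := (x - 1) / (x + 1) with htdef
    have ht0 : 0 < t := div_pos hx1 hx2
    have ht1 : t < 1 := (div_lt_one hx2).mpr (by linarith)
    -- bound A on the series
    have hA := aux_series_bound hβ hβ1 ht0 ht1 hδ0 hδ1 hδβ
    have h1mt : 1 - t = 2 / (x + 1) := by
      rw [htdef]; field_simp; norm_num
    have hlogA : -Real.log (1 - t) = Real.log ((x + 1) / 2) := by
      rw [h1mt, ← Real.log_inv]
      congr 1
      field_simp
    rw [hlogA] at hA
    -- bound B on the rpow part
    set u : ℝ := (x + 1) / (x - 1) with hudef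
    have hu1 : 1 < u := (one_lt_div hx1).mpr (by linarith)
    have hu0 : 0 < u := by linarith
    have hlogu : 0 < Real.log u := Real.log_pos hu1
    have hBraw : |u ^ (α x - 1) - 1| ≤ |α x - 1| * Real.log u * u := by
      rw [Real.rpow_def_of_pos hu0, mul_comm (Real.log u)]
      calc |Real.exp ((α x - 1) * Real.log u) - 1|
          ≤ |(α x - 1) * Real.log u| * Real.exp |(α x - 1) * Real.log u| :=
            aux_abs_exp_sub_one _
        _ ≤ (|α x - 1| * Real.log u) * u := by
            rw [abs_mul, abs_of_pos hlogu]
            apply mul_le_mul_of_nonneg_left _ (by positivity)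
            calc Real.exp (|α x - 1| * Real.log u) ≤ Real.exp (Real.log u) := by
                  apply Real.exp_le_exp.mpr
                  have hae : |α x - 1| ≤ 1 :=
                    abs_le.mpr ⟨by linarith [hαx.1], by linarith [hαx.2.1]⟩
                  nlinarith [abs_nonneg (α x - 1)]
              _ = u := Real.exp_log hu0
        _ = |α x - 1| * Real.log u * u := rfl
    have hαne : α x - 1 ≠ 0 := fun h => hαx.2.2 (by linarith [sub_eq_zero.mp h])
    have hα1pos : 0 < |α x - 1| := abs_pos.mpr hαne
    have hlogub : Real.log u ≤ 2 / (x - 1) := by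
      have h1 := Real.log_le_sub_one_of_pos hu0
      have h2 : u - 1 = 2 / (x - 1) := by rw [hudef]; field_simp; norm_num
      linarith [h2 ▸ h1]
    have hB : |u ^ (α x - 1) - 1| / |α x - 1| ≤ 2 * (x + 1) / (x - 1) ^ 2 := by
      rw [div_le_iff₀ hα1pos]
      calc |u ^ (α x - 1) - 1| ≤ |α x - 1| * Real.log u * u := hBraw
        _ ≤ |α x - 1| * (2 / (x - 1)) * u := by
            apply mul_le_mul_of_nonneg_right _ hu0.le
            exact mul_le_mul_of_nonneg_left hlogub (abs_nonneg _)
        _ = 2 * (x + 1) / (x - 1) ^ 2 * |α x - 1| := by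
            rw [hudef]; field_simp
    -- put the bounds together
    have hA0 : (0:ℝ) ≤ 1 + Real.log ((x + 1) / 2) / δ := by
      have : (0:ℝ) ≤ Real.log ((x + 1) / 2) := Real.log_nonneg (by linarith)
      positivity
    rw [Real.norm_eq_abs, abs_mul, abs_div]
    calc |∑' n : ℕ, (β / (β + n)) * t ^ n| / |α x - 1| * |u ^ (α x - 1) - 1|
        = |∑' n : ℕ, (β / (β + n)) * t ^ n| * (|u ^ (α x - 1) - 1| / |α x - 1|) := by
          ring
      _ ≤ (1 + Real.log ((x + 1) / 2) / δ) * (2 * (x + 1) / (x - 1) ^ 2) :=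
          mul_le_mul hA hB (by positivity) hA0
      _ = g x := by
          simp only [hg]
          field_simp
  · -- the bound tends to 0
    have hlog : Tendsto (fun y : ℝ => Real.log y / y) atTop (nhds 0) := by
      have := Real.tendsto_pow_log_div_mul_add_atTop 1 0 1 one_ne_zero
      simpa using this
    have h1 : Tendsto (fun y : ℝ => (1 + Real.log y / δ) / y) atTop (nhds 0) := by
      have ha : Tendsto (fun y : ℝ => y⁻¹) atTop (nhds 0) := tendsto_inv_atTop_zero
      have hb := hlog.div_const δ
      have hc := ha.add hb
      rw [zero_div, add_zero] at hc
      refine hc.congr fun y => ?_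
      ring
    have h2 : Tendsto (fun x : ℝ => (x + 1) / 2) atTop atTop :=
      (tendsto_atTop_add_const_right atTop 1 tendsto_id).atTop_div_const (by norm_num)
    have hfirst : Tendsto (fun x : ℝ =>
        (1 + Real.log ((x + 1) / 2) / δ) / ((x + 1) / 2)) atTop (nhds 0) := h1.comp h2
    have h3 : Tendsto (fun x : ℝ => (x + 1) / (x - 1)) atTop (nhds 1) := by
      have hid : Tendsto (fun x : ℝ => x - 1) atTop atTop :=
        tendsto_atTop_add_const_right atTop (-1) tendsto_id
      have hinv : Tendsto (fun x : ℝ => (x - 1)⁻¹) atTop (nhds 0) := hid.inv_tendsto_atTop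
      have hmain : Tendsto (fun x : ℝ => 1 + 2 * (x - 1)⁻¹) atTop (nhds (1 + 2 * 0)) :=
        tendsto_const_nhds.add (hinv.const_mul 2)
      rw [mul_zero, add_zero] at hmain
      refine hmain.congr' ?_
      filter_upwards [eventually_gt_atTop 1] with x hx
      have hne : x - 1 ≠ 0 := ne_of_gt (by linarith)
      field_simp
      ring
    have hsecond : Tendsto (fun x : ℝ => ((x + 1) / (x - 1)) ^ 2) atTop (nhds 1) := by
      have := h3.pow 2
      simpa using this
    have := hfirst.mul hsecond
    rw [zero_mul] at this
    exact this
end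

section
/- Let α : ℝ → ℝ satisfy α(x) ∈ (0,2) for all x, and let φ : ℝ → [0,∞) be a function satisfying φ(z) ≤ |z| for |z| ≤ 1. Then lim_{x→∞} α(x)·(1+x)^{α(x)} · ∫_{x−1}^{x+1} ln( (1+φ(x−y)) / (1+x) ) · y^{−α(x)−1} dy = 0. -/
open Filter Real MeasureTheory

/-- Equation (3.15): if `α(x) ∈ (0,2)` and `φ ≥ 0` with `φ(z) ≤ |z|` for
`|z| ≤ 1`, then
`α(x)(1+x)^{α(x)} ∫_{x−1}^{x+1} ln((1+φ(x−y))/(1+x)) y^{−α(x)−1} dy → 0`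
as `x → ∞`. -/
theorem stmt_11 (α : ℝ → ℝ) (hα : ∀ x, α x ∈ Set.Ioo (0:ℝ) 2)
    (φ : ℝ → ℝ) (hφ0 : ∀ z, 0 ≤ φ z) (hφ : ∀ z, |z| ≤ 1 → φ z ≤ |z|) :
    Tendsto
      (fun x : ℝ => α x * (1 + x) ^ (α x) *
        ∫ y in (x - 1)..(x + 1),
          Real.log ((1 + φ (x - y)) / (1 + x)) * y ^ (-(α x) - 1))
      atTop (nhds 0) := by
  have hg : Tendsto (fun x : ℝ => 32 * (Real.log (x - 1) / (x - 1))) atTop (nhds 0) := by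
    have h1 : Tendsto (fun x : ℝ => x - 1) atTop atTop :=
      tendsto_atTop_add_const_right _ _ tendsto_id
    have h2 := (Real.isLittleO_log_id_atTop.tendsto_div_nhds_zero).comp h1
    have := h2.const_mul (32:ℝ)
    simpa using this
  refine squeeze_zero_norm' ?_ hg
  filter_upwards [eventually_ge_atTop (4:ℝ)] with x hx
  obtain ⟨ha0, ha2⟩ := hα x
  set a := α x with hadef
  have hx1 : (3:ℝ) ≤ x - 1 := by linarith
  have hx1pos : (0:ℝ) < x - 1 := by linarith
  have hxpos : (0:ℝ) < 1 + x := by linarith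
  -- pointwise bound on the integrand
  have hC : ∀ y ∈ Set.uIoc (x - 1) (x + 1),
      ‖Real.log ((1 + φ (x - y)) / (1 + x)) * y ^ (-a - 1)‖ ≤
        Real.log (1 + x) * (x - 1) ^ (-a - 1) := by
    intro y hy
    rw [Set.uIoc_of_le (by linarith : x - 1 ≤ x + 1)] at hy
    obtain ⟨hy1, hy2⟩ := hy
    have hypos : (0:ℝ) < y := by linarith
    have habs : |x - y| ≤ 1 := by rw [abs_le]; constructor <;> linarith
    have hφle : φ (x - y) ≤ 1 := le_trans (hφ _ habs) habs
    have hφn : 0 ≤ φ (x - y) := hφ0 _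
    have h1φ : (0:ℝ) < 1 + φ (x - y) := by linarith
    have hle : 1 + φ (x - y) ≤ 1 + x := by linarith
    have hlog1 : |Real.log ((1 + φ (x - y)) / (1 + x))| ≤ Real.log (1 + x) := by
      rw [Real.log_div (ne_of_gt h1φ) (ne_of_gt hxpos)]
      have h3 : Real.log (1 + φ (x - y)) ≤ Real.log (1 + x) :=
        Real.log_le_log h1φ hle
      have h4 : 0 ≤ Real.log (1 + φ (x - y)) := Real.log_nonneg (by linarith)
      rw [abs_of_nonpos (by linarith)]
      linarith
    have hrpow : y ^ (-a - 1) ≤ (x - 1) ^ (-a - 1) :=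
      Real.rpow_le_rpow_of_nonpos hx1pos hy1.le (by linarith)
    rw [norm_mul, Real.norm_eq_abs, Real.norm_eq_abs,
      abs_of_pos (Real.rpow_pos_of_pos hypos _)]
    have hy0 : 0 ≤ y ^ (-a - 1) := (Real.rpow_pos_of_pos hypos _).le
    have hl0 : 0 ≤ Real.log (1 + x) := Real.log_nonneg (by linarith)
    exact mul_le_mul hlog1 hrpow hy0 hl0
  have hI := intervalIntegral.norm_integral_le_of_norm_le_const hC
  have hI2 : ‖∫ y in (x - 1)..(x + 1),
      Real.log ((1 + φ (x - y)) / (1 + x)) * y ^ (-a - 1)‖ ≤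
      Real.log (1 + x) * (x - 1) ^ (-a - 1) * 2 := by
    have : |x + 1 - (x - 1)| = 2 := by norm_num
    rwa [this] at hI
  -- key rpow estimate
  have hkey : (1 + x) ^ a * (x - 1) ^ (-a - 1) ≤ 4 / (x - 1) := by
    have h1 : (x - 1) ^ (-a - 1) = ((x - 1) ^ a * (x - 1))⁻¹ := by
      rw [show -a - 1 = -(a + 1) by ring, Real.rpow_neg hx1pos.le,
        Real.rpow_add hx1pos, Real.rpow_one]
    have h2 : (1 + x) ^ a ≤ 4 * (x - 1) ^ a := by
      have h3 : (1 + x) ^ a ≤ (2 * (x - 1)) ^ a :=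
        Real.rpow_le_rpow hxpos.le (by linarith) ha0.le
      have h4 : (2 * (x - 1)) ^ a = 2 ^ a * (x - 1) ^ a :=
        Real.mul_rpow (by norm_num) hx1pos.le
      have h5 : (2:ℝ) ^ a ≤ 2 ^ (2:ℝ) :=
        Real.rpow_le_rpow_of_exponent_le one_le_two ha2.le
      have h6 : (2:ℝ) ^ (2:ℝ) = 4 := by
        rw [show (2:ℝ) = ((2:ℕ):ℝ) from by norm_num, Real.rpow_natCast]; norm_num
      have hposx : 0 ≤ (x - 1) ^ a := (Real.rpow_pos_of_pos hx1pos _).le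
      calc (1 + x) ^ a ≤ 2 ^ a * (x - 1) ^ a := by rw [← h4]; exact h3
        _ ≤ 4 * (x - 1) ^ a := by nlinarith
    rw [h1]
    have hpa : (0:ℝ) < (x - 1) ^ a := Real.rpow_pos_of_pos hx1pos _
    calc (1 + x) ^ a * ((x - 1) ^ a * (x - 1))⁻¹
        ≤ 4 * (x - 1) ^ a * ((x - 1) ^ a * (x - 1))⁻¹ := by
          apply mul_le_mul_of_nonneg_right h2 (by positivity)
      _ = 4 / (x - 1) := by field_simp
  have hlogle : Real.log (1 + x) ≤ 2 * Real.log (x - 1) := by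
    have h7 : 1 + x ≤ (x - 1) ^ (2:ℕ) := by nlinarith
    have := Real.log_le_log hxpos h7
    rwa [Real.log_pow] at this
  have hlpos : 0 ≤ Real.log (x - 1) := Real.log_nonneg (by linarith)
  -- combine
  have hnorm : ‖α x * (1 + x) ^ a *
      ∫ y in (x - 1)..(x + 1),
        Real.log ((1 + φ (x - y)) / (1 + x)) * y ^ (-a - 1)‖ =
      a * (1 + x) ^ a * ‖∫ y in (x - 1)..(x + 1),
        Real.log ((1 + φ (x - y)) / (1 + x)) * y ^ (-a - 1)‖ := by
    rw [norm_mul, norm_mul, Real.norm_eq_abs, Real.norm_eq_abs,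
      abs_of_pos ha0, abs_of_pos (Real.rpow_pos_of_pos hxpos _)]
  rw [hnorm]
  have hpowpos : (0:ℝ) < (1 + x) ^ a := Real.rpow_pos_of_pos hxpos _
  have hstep : a * (1 + x) ^ a * ‖∫ y in (x - 1)..(x + 1),
      Real.log ((1 + φ (x - y)) / (1 + x)) * y ^ (-a - 1)‖ ≤
      a * (1 + x) ^ a * (Real.log (1 + x) * (x - 1) ^ (-a - 1) * 2) := by
    apply mul_le_mul_of_nonneg_left hI2 (by positivity)
  refine hstep.trans ?_
  have hrw : a * (1 + x) ^ a * (Real.log (1 + x) * (x - 1) ^ (-a - 1) * 2) =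
      2 * a * Real.log (1 + x) * ((1 + x) ^ a * (x - 1) ^ (-a - 1)) := by ring
  rw [hrw]
  have hlx : 0 ≤ Real.log (1 + x) := Real.log_nonneg (by linarith)
  have hprodpos : 0 ≤ (1 + x) ^ a * (x - 1) ^ (-a - 1) := by positivity
  calc 2 * a * Real.log (1 + x) * ((1 + x) ^ a * (x - 1) ^ (-a - 1))
      ≤ 2 * 2 * (2 * Real.log (x - 1)) * (4 / (x - 1)) := by
        apply mul_le_mul
        · apply mul_le_mul
          · nlinarith
          · exact hlogle
          · exact hlx
          · positivity
        · exact hkey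
        · exact hprodpos
        · positivity
    _ = 32 * (Real.log (x - 1) / (x - 1)) := by ring
end

section
/- Let φ : ℝ → [0,∞) be a continuous function satisfying φ(z) = |z| for |z| > 1 and φ(z) ≤ |z| for |z| ≤ 1. Then lim_{x→∞} (1+x) · ∫_{{y∈ℝ : |y|>1}} ( ln(1+φ(x+y)) − ln(1+x) ) · y^{−2} dy = 0. -/
open Filter Real MeasureTheory Set

section helpers

lemma H4' (c b : ℝ) : Tendsto (fun x : ℝ => c / (x + b)) atTop (nhds 0) := by
  simpa [div_eq_mul_inv] using ((tendsto_atTop_add_const_right atTop b tendsto_id).inv_tendsto_atTop).const_mul c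

lemma H3' (a b : ℝ) : Tendsto (fun x : ℝ => (x + a) / (x + b)) atTop (nhds 1) := by
  have h1 : Tendsto (fun x : ℝ => 1 + (a - b) / (x + b)) atTop (nhds 1) := by
    simpa using (H4' (a - b) b).const_add 1
  apply h1.congr'
  filter_upwards [eventually_gt_atTop (-b)] with x hx
  have : x + b ≠ 0 := by linarith
  field_simp
  ring

lemma H1' (a b : ℝ) : Tendsto (fun x : ℝ => Real.log (x + a) - Real.log (x + b)) atTop (nhds 0) := by
  have h2 : Tendsto (fun x : ℝ => Real.log ((x + a) / (x + b))) atTop (nhds 0) := by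
    have := (Real.continuousAt_log (by norm_num : (1:ℝ) ≠ 0)).tendsto.comp (H3' a b)
    simpa [Function.comp_def] using this
  apply h2.congr'
  filter_upwards [eventually_gt_atTop (-a), eventually_gt_atTop (-b)] with x h1 h2
  rw [Real.log_div (by linarith) (by linarith)]

lemma H2' (a b : ℝ) : Tendsto (fun x : ℝ => Real.log (x + a) / (x + b)) atTop (nhds 0) := by
  have hd : Tendsto (fun x : ℝ => Real.log (x + a) / (x + a)) atTop (nhds 0) := by
    have : Tendsto (fun x : ℝ => x + a) atTop atTop :=
      tendsto_atTop_add_const_right atTop a tendsto_id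
    exact (Real.isLittleO_log_id_atTop.comp_tendsto this).tendsto_div_nhds_zero
  have := hd.mul (H3' a b)
  rw [zero_mul] at this
  apply this.congr'
  filter_upwards [eventually_gt_atTop (-a), eventually_gt_atTop (-b), eventually_gt_atTop 0]
    with x h1 h2 h3
  have ha : x + a ≠ 0 := by linarith
  field_simp

lemma logLower' {t : ℝ} (h0 : 0 ≤ t) (h1 : t ≤ 1/2) : -2*t ≤ Real.log (1 - t) := by
  have hpos : (0:ℝ) < 1 - t := by linarith
  have := Real.log_le_sub_one_of_pos (x := (1-t)⁻¹) (by positivity)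
  rw [Real.log_inv] at this
  have hb : (1-t)⁻¹ - 1 ≤ 2*t := by
    rw [inv_eq_one_div, div_sub' (ne_of_gt hpos)]
    rw [div_le_iff₀ hpos]
    nlinarith
  linarith

lemma HT1' : Tendsto (fun x : ℝ => (x+1) * (Real.log (x+2) + Real.log x - 2*Real.log (x+1)))
    atTop (nhds 0) := by
  have hup : Tendsto (fun _ : ℝ => (0:ℝ)) atTop (nhds 0) := tendsto_const_nhds
  have hlo : Tendsto (fun x : ℝ => -2 / (x+1)) atTop (nhds 0) := by
    simpa using H4' (-2) 1
  apply tendsto_of_tendsto_of_tendsto_of_le_of_le' hlo hup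
  · filter_upwards [eventually_gt_atTop 2] with x hx
    have h1 : (0:ℝ) < x + 1 := by linarith
    have key : Real.log (x+2) + Real.log x - 2*Real.log (x+1) = Real.log (1 - ((x+1)^2)⁻¹) := by
      have e : 1 - ((x+1)^2)⁻¹ = ((x+2)*x)/(x+1)^2 := by field_simp; ring
      rw [e, Real.log_div (by nlinarith) (by positivity), Real.log_mul (by linarith) (by linarith),
        Real.log_pow]
      push_cast; ring
    rw [key]
    have ht0 : (0:ℝ) ≤ ((x+1)^2)⁻¹ := by positivity
    have ht1 : ((x+1)^2)⁻¹ ≤ 1/2 := by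
      rw [inv_le_comm₀ (by positivity) (by norm_num)]
      nlinarith
    have hll := logLower' ht0 ht1
    have step1 : (x+1) * (-2 * ((x+1)^2)⁻¹) ≤ (x+1) * Real.log (1 - ((x+1)^2)⁻¹) :=
      mul_le_mul_of_nonneg_left hll (le_of_lt h1)
    have step2 : -2/(x+1) = (x+1) * (-2 * ((x+1)^2)⁻¹) := by
      field_simp
    rw [step2]
    exact step1
  · filter_upwards [eventually_gt_atTop 2] with x hx
    have h1 : (0:ℝ) < x + 1 := by linarith
    have key : Real.log (x+2) + Real.log x - 2*Real.log (x+1) = Real.log (1 - ((x+1)^2)⁻¹) := by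
      have e : 1 - ((x+1)^2)⁻¹ = ((x+2)*x)/(x+1)^2 := by field_simp; ring
      rw [e, Real.log_div (by nlinarith) (by positivity), Real.log_mul (by linarith) (by linarith),
        Real.log_pow]
      push_cast; ring
    rw [key]
    have hlog : Real.log (1 - ((x+1)^2)⁻¹) ≤ 0 := by
      apply Real.log_nonpos
      · have : ((x+1)^2)⁻¹ ≤ 1 := by
          rw [inv_le_comm₀ (by positivity) one_pos]
          nlinarith
        linarith
      · have : (0:ℝ) < ((x+1)^2)⁻¹ := by positivity
        linarith
    exact mul_nonpos_of_nonneg_of_nonpos (le_of_lt h1) hlog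

end helpers

noncomputable def Gaux (c d C t : ℝ) : ℝ :=
  -Real.log (c + d*t)/t + (d/c)*(Real.log t - Real.log (c + d*t)) + C/t

lemma Gaux_deriv (c d C y : ℝ) (hc : c ≠ 0) (hy : 0 < y) (hcd : 0 < c + d*y) :
    HasDerivAt (Gaux c d C) ((Real.log (c + d*y) - C)/y^2) y := by
  have hy' : y ≠ 0 := ne_of_gt hy
  have hcd' : c + d*y ≠ 0 := ne_of_gt hcd
  have h1 : HasDerivAt (fun t : ℝ => c + d*t) d y := by
    simpa using ((hasDerivAt_id y).const_mul d).const_add c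
  have hlog1 : HasDerivAt (fun t : ℝ => Real.log (c + d*t)) (d/(c + d*y)) y :=
    h1.log hcd'
  have hlogt : HasDerivAt Real.log y⁻¹ y := Real.hasDerivAt_log hy'
  have hA : HasDerivAt (fun t : ℝ => -Real.log (c + d*t)/t)
      (((-(d/(c + d*y)))*y - (-Real.log (c + d*y))*1)/y^2) y :=
    (hlog1.neg).div (hasDerivAt_id y) hy'
  have hB : HasDerivAt (fun t : ℝ => (d/c)*(Real.log t - Real.log (c + d*t)))
      ((d/c) * (y⁻¹ - d/(c + d*y))) y := (hlogt.sub hlog1).const_mul (d/c)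
  have hC : HasDerivAt (fun t : ℝ => C/t) ((0*y - C*1)/y^2) y :=
    (hasDerivAt_const y C).div (hasDerivAt_id y) hy'
  have := (hA.add hB).add hC
  refine this.congr_deriv ?_
  field_simp
  ring

lemma Gaux_tendsto (c C : ℝ) : Tendsto (Gaux c 1 C) atTop (nhds 0) := by
  have h1 : Tendsto (fun t : ℝ => Real.log (c + 1*t)/t) atTop (nhds 0) := by
    apply (H2' c 0).congr'
    filter_upwards [eventually_gt_atTop 0] with t ht
    rw [add_zero, one_mul, add_comm]
  have h2 : Tendsto (fun t : ℝ => Real.log t - Real.log (c + 1*t)) atTop (nhds 0) := by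
    apply (H1' 0 c).congr'
    filter_upwards [eventually_gt_atTop 0] with t ht
    rw [add_zero, one_mul, add_comm c t]
  have h3 : Tendsto (fun t : ℝ => C/t) atTop (nhds 0) := by
    simpa using H4' C 0
  have := ((h1.neg.div_const 1).add (h2.const_mul (1/c))).add h3
  simp only [neg_zero, mul_zero, add_zero, zero_add, zero_div] at this
  apply this.congr (fun t => ?_)
  simp [Gaux]
  ring

lemma contAux (x a b : ℝ) (c d : ℝ) (h : ∀ y ∈ Icc a b, 0 < c + d*y)
    (h0 : ∀ y ∈ Icc a b, y ≠ 0) :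
    ContinuousOn (fun y : ℝ => (Real.log (c + d*y) - Real.log (1+x))/y^2) (Icc a b) := by
  apply ContinuousOn.div
  · apply ContinuousOn.sub _ continuousOn_const
    apply ContinuousOn.log
    · exact (continuousOn_const.add (continuousOn_const.mul continuousOn_id))
    · exact fun y hy => ne_of_gt (h y hy)
  · exact (continuousOn_id.pow 2)
  · exact fun y hy => pow_ne_zero 2 (h0 y hy)

lemma ftcR (x : ℝ) (hx : 3 < x) :
    IntegrableOn (fun y : ℝ => (Real.log (x+1 + 1*y) - Real.log (1+x))/y^2) (Ioi 1) volume ∧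
    ∫ y in Ioi (1:ℝ), (Real.log (x+1 + 1*y) - Real.log (1+x))/y^2 =
      0 - Gaux (x+1) 1 (Real.log (1+x)) 1 := by
  have hc : (x+1 : ℝ) ≠ 0 := by linarith
  have hderiv : ∀ t ∈ Ici (1:ℝ), HasDerivAt (Gaux (x+1) 1 (Real.log (1+x)))
      ((Real.log (x+1 + 1*t) - Real.log (1+x))/t^2) t := by
    intro t ht
    have ht' : (0:ℝ) < t := lt_of_lt_of_le one_pos ht
    exact Gaux_deriv (x+1) 1 (Real.log (1+x)) t hc ht' (by simp only [one_mul]; linarith)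
  have hpos : ∀ t ∈ Ioi (1:ℝ), 0 ≤ (Real.log (x+1 + 1*t) - Real.log (1+x))/t^2 := by
    intro t ht
    have ht' : (1:ℝ) < t := ht
    apply div_nonneg _ (sq_nonneg t)
    have := Real.log_le_log (by linarith : (0:ℝ) < 1+x) (by linarith : (1:ℝ)+x ≤ x+1+1*t)
    linarith
  exact ⟨integrableOn_Ioi_deriv_of_nonneg' hderiv hpos (Gaux_tendsto (x+1) (Real.log (1+x))),
    integral_Ioi_of_hasDerivAt_of_nonneg' hderiv hpos (Gaux_tendsto (x+1) (Real.log (1+x)))⟩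

lemma ftcL1 (x : ℝ) (hx : 3 < x) :
    IntegrableOn (fun y : ℝ => (Real.log (x+1 + (-1)*y) - Real.log (1+x))/y^2)
      (Ioc 1 (x-2)) volume ∧
    ∫ y in Ioc (1:ℝ) (x-2), (Real.log (x+1 + (-1)*y) - Real.log (1+x))/y^2 =
      Gaux (x+1) (-1) (Real.log (1+x)) (x-2) - Gaux (x+1) (-1) (Real.log (1+x)) 1 := by
  have hle : (1:ℝ) ≤ x - 2 := by linarith
  have hcont : ContinuousOn (fun y : ℝ => (Real.log (x+1 + (-1)*y) - Real.log (1+x))/y^2)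
      (Icc 1 (x-2)) := by
    apply contAux x 1 (x-2)
    · intro y hy; nlinarith [hy.1, hy.2]
    · intro y hy; have := hy.1; intro h; rw [h] at this; linarith
  have hInt : IntervalIntegrable (fun y : ℝ => (Real.log (x+1 + (-1)*y) - Real.log (1+x))/y^2)
      volume 1 (x-2) := by
    apply ContinuousOn.intervalIntegrable
    rwa [uIcc_of_le hle]
  have hderiv : ∀ t ∈ uIcc (1:ℝ) (x-2), HasDerivAt (Gaux (x+1) (-1) (Real.log (1+x)))
      ((Real.log (x+1 + (-1)*t) - Real.log (1+x))/t^2) t := by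
    intro t ht
    rw [uIcc_of_le hle] at ht
    have h1 : (0:ℝ) < t := by have := ht.1; linarith
    have h2 : (0:ℝ) < x+1 + (-1)*t := by nlinarith [ht.2]
    exact Gaux_deriv (x+1) (-1) (Real.log (1+x)) t (by linarith) h1 h2
  have := intervalIntegral.integral_eq_sub_of_hasDerivAt hderiv hInt
  rw [intervalIntegral.integral_of_le hle] at this
  exact ⟨(intervalIntegrable_iff_integrableOn_Ioc_of_le hle).mp hInt, this⟩

lemma ftcT (x : ℝ) (hx : 3 < x) :
    IntegrableOn (fun y : ℝ => (Real.log (1-x + 1*y) - Real.log (1+x))/y^2) (Ioi (x+2)) volume ∧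
    ∫ y in Ioi (x+2), (Real.log (1-x + 1*y) - Real.log (1+x))/y^2 =
      0 - Gaux (1-x) 1 (Real.log (1+x)) (x+2) := by
  have hc : (1-x : ℝ) ≠ 0 := by intro h; nlinarith [h]
  have hle : x + 2 ≤ 2*x := by linarith
  set e : ℝ → ℝ := fun y : ℝ => (Real.log (1-x + 1*y) - Real.log (1+x))/y^2 with he
  have hcont : ContinuousOn e (Icc (x+2) (2*x)) := by
    apply contAux x (x+2) (2*x)
    · intro y hy; nlinarith [hy.1]
    · intro y hy; have := hy.1; intro h; rw [h] at this; linarith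
  have hInt : IntervalIntegrable e volume (x+2) (2*x) := by
    apply ContinuousOn.intervalIntegrable
    rwa [uIcc_of_le hle]
  have hderiv1 : ∀ t ∈ uIcc (x+2) (2*x), HasDerivAt (Gaux (1-x) 1 (Real.log (1+x)))
      ((Real.log (1-x + 1*t) - Real.log (1+x))/t^2) t := by
    intro t ht
    rw [uIcc_of_le hle] at ht
    have h1 : (0:ℝ) < t := by have := ht.1; linarith
    have h2 : (0:ℝ) < 1-x + 1*t := by nlinarith [ht.1]
    exact Gaux_deriv (1-x) 1 (Real.log (1+x)) t hc h1 h2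
  have hmid := intervalIntegral.integral_eq_sub_of_hasDerivAt hderiv1 hInt
  rw [intervalIntegral.integral_of_le hle] at hmid
  have hmidInt : IntegrableOn e (Ioc (x+2) (2*x)) volume :=
    (intervalIntegrable_iff_integrableOn_Ioc_of_le hle).mp hInt
  have hderiv2 : ∀ t ∈ Ici (2*x), HasDerivAt (Gaux (1-x) 1 (Real.log (1+x)))
      ((Real.log (1-x + 1*t) - Real.log (1+x))/t^2) t := by
    intro t ht
    have ht' : 2*x ≤ t := ht
    exact Gaux_deriv (1-x) 1 (Real.log (1+x)) t hc (by linarith) (by nlinarith)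
  have hpos : ∀ t ∈ Ioi (2*x), 0 ≤ e t := by
    intro t ht
    have ht' : 2*x < t := ht
    apply div_nonneg _ (sq_nonneg t)
    have := Real.log_le_log (by linarith : (0:ℝ) < 1+x) (by linarith : (1:ℝ)+x ≤ 1-x+1*t)
    linarith
  have htailInt : IntegrableOn e (Ioi (2*x)) volume :=
    integrableOn_Ioi_deriv_of_nonneg' hderiv2 hpos (Gaux_tendsto (1-x) (Real.log (1+x)))
  have htail := integral_Ioi_of_hasDerivAt_of_nonneg' hderiv2 hpos
    (Gaux_tendsto (1-x) (Real.log (1+x)))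
  have hsplit : Ioc (x+2) (2*x) ∪ Ioi (2*x) = Ioi (x+2) := Ioc_union_Ioi_eq_Ioi hle
  have hIntAll : IntegrableOn e (Ioi (x+2)) volume := by
    rw [← hsplit]
    exact hmidInt.union htailInt
  refine ⟨hIntAll, ?_⟩
  rw [← hsplit, setIntegral_union Ioc_disjoint_Ioi_same measurableSet_Ioi hmidInt htailInt,
    hmid, htail]
  ring

lemma key_lemma (φ : ℝ → ℝ) (hcont : Continuous φ) (hφ0 : ∀ z, 0 ≤ φ z)
    (hφ1 : ∀ z, 1 < |z| → φ z = |z|) (hφ2 : ∀ z, |z| ≤ 1 → φ z ≤ |z|)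
    (x : ℝ) (hx : 3 < x) :
    (∫ y in {y : ℝ | 1 < |y|}, (Real.log (1 + φ (x + y)) - Real.log (1 + x)) / y ^ 2) =
      ((0 - Gaux (x+1) 1 (Real.log (1+x)) 1)
        + ((Gaux (x+1) (-1) (Real.log (1+x)) (x-2) - Gaux (x+1) (-1) (Real.log (1+x)) 1)
          + (0 - Gaux (1-x) 1 (Real.log (1+x)) (x+2))))
      + ∫ y in Ioc (x-2) (x+2), (Real.log (1 + φ (x - y)) - Real.log (1 + x)) / y ^ 2 := by
  have hx0 : (0:ℝ) < x := by linarith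
  set F : ℝ → ℝ := fun y => (Real.log (1 + φ (x + y)) - Real.log (1 + x)) / y ^ 2 with hF
  set gL : ℝ → ℝ := fun y => (Real.log (1 + φ (x - y)) - Real.log (1 + x)) / y ^ 2 with hgL
  have hSet : {y : ℝ | 1 < |y|} = Iio (-1) ∪ Ioi 1 := by
    ext y
    simp only [mem_setOf_eq, lt_abs, mem_union, mem_Iio, mem_Ioi]
    constructor
    · rintro (h | h)
      · exact Or.inr h
      · exact Or.inl (by linarith)
    · rintro (h | h)
      · exact Or.inr (by linarith)
      · exact Or.inl h
  -- right side
  have hEqR : EqOn F (fun y : ℝ => (Real.log (x+1 + 1*y) - Real.log (1+x))/y^2) (Ioi 1) := by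
    intro y hy
    have hy' : (1:ℝ) < y := hy
    have habs : 1 < |x + y| := by rw [abs_of_pos (by linarith)]; linarith
    have harg : (1:ℝ) + φ (x + y) = x+1 + 1*y := by
      rw [hφ1 _ habs, abs_of_pos (by linarith)]; ring
    simp only [hF, harg]
  have hIR : IntegrableOn F (Ioi 1) volume :=
    (ftcR x hx).1.congr_fun hEqR.symm measurableSet_Ioi
  have hValR : ∫ y in Ioi (1:ℝ), F y = 0 - Gaux (x+1) 1 (Real.log (1+x)) 1 := by
    rw [setIntegral_congr_fun measurableSet_Ioi hEqR, (ftcR x hx).2]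
  -- left side pieces
  have hEqL1 : EqOn gL (fun y : ℝ => (Real.log (x+1 + (-1)*y) - Real.log (1+x))/y^2)
      (Ioc 1 (x-2)) := by
    intro y hy
    have h1 : (1:ℝ) < y := hy.1
    have h2 : y ≤ x - 2 := hy.2
    have habs : 1 < |x - y| := by rw [abs_of_pos (by linarith)]; linarith
    have harg : (1:ℝ) + φ (x - y) = x+1 + (-1)*y := by
      rw [hφ1 _ habs, abs_of_pos (by linarith)]; ring
    simp only [hgL, harg]
  have hEqT : EqOn gL (fun y : ℝ => (Real.log (1-x + 1*y) - Real.log (1+x))/y^2)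
      (Ioi (x+2)) := by
    intro y hy
    have h1 : x + 2 < y := hy
    have habs : 1 < |x - y| := by rw [abs_of_neg (by linarith)]; linarith
    have harg : (1:ℝ) + φ (x - y) = 1-x + 1*y := by
      rw [hφ1 _ habs, abs_of_neg (by linarith)]; ring
    simp only [hgL, harg]
  have hIL1 : IntegrableOn gL (Ioc 1 (x-2)) volume :=
    (ftcL1 x hx).1.congr_fun hEqL1.symm measurableSet_Ioc
  have hIT : IntegrableOn gL (Ioi (x+2)) volume :=
    (ftcT x hx).1.congr_fun hEqT.symm measurableSet_Ioi
  have hIM : IntegrableOn gL (Ioc (x-2) (x+2)) volume := by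
    have hnum : Continuous fun y : ℝ => Real.log (1 + φ (x - y)) := by
      apply Continuous.log
      · continuity
      · intro y
        have := hφ0 (x - y)
        intro h; linarith
    have hgc : ContinuousOn gL (Icc (x-2) (x+2)) := by
      apply ContinuousOn.div ((hnum.continuousOn).sub continuousOn_const)
        ((continuous_pow 2).continuousOn)
      intro y hy
      have h1y : (1:ℝ) < y := by have := hy.1; linarith
      exact pow_ne_zero 2 (by linarith)
    exact (hgc.integrableOn_compact isCompact_Icc).mono_set Ioc_subset_Icc_self
  have h12 : (1:ℝ) ≤ x + 2 := by linarith
  have h1m : (1:ℝ) ≤ x - 2 := by linarith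
  have hmm : x - 2 ≤ x + 2 := by linarith
  have hIL12 : IntegrableOn gL (Ioc 1 (x+2)) volume := by
    rw [← Ioc_union_Ioc_eq_Ioc h1m hmm]
    exact hIL1.union hIM
  have hILioi : IntegrableOn gL (Ioi 1) volume := by
    rw [← Ioc_union_Ioi_eq_Ioi h12]
    exact hIL12.union hIT
  -- relation between F on the left and gL
  have hNegEq : ∀ y : ℝ, F (-y) = gL y := by
    intro y
    simp only [hF, hgL, ← sub_eq_add_neg, neg_sq]
  have hILeft : IntegrableOn F (Iio (-1)) volume := by
    have mEmb : MeasurableEmbedding (Neg.neg : ℝ → ℝ) :=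
      (Homeomorph.neg ℝ).measurableEmbedding
    rw [← Measure.map_neg_eq_self (volume : Measure ℝ)]
    rw [mEmb.integrableOn_map_iff]
    have hpre : (Neg.neg : ℝ → ℝ) ⁻¹' Iio (-1) = Ioi 1 := by
      ext a
      simp only [mem_preimage, mem_Iio, mem_Ioi]
      constructor <;> intro <;> linarith
    rw [hpre]
    have : (F ∘ (Neg.neg : ℝ → ℝ)) = gL := funext fun y => hNegEq y
    rw [this]
    exact hILioi
  have hLeftVal : ∫ y in Iio (-1:ℝ), F y = ∫ y in Ioi (1:ℝ), gL y := by
    rw [setIntegral_congr_set (Iio_ae_eq_Iic (a := (-1:ℝ))), ← integral_comp_neg_Ioi]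
    exact setIntegral_congr_fun measurableSet_Ioi fun y _ => hNegEq y
  -- split of the left integral
  have hsplitL : ∫ y in Ioi (1:ℝ), gL y =
      (∫ y in Ioc (1:ℝ) (x-2), gL y) + (∫ y in Ioc (x-2) (x+2), gL y)
        + ∫ y in Ioi (x+2), gL y := by
    rw [← Ioc_union_Ioi_eq_Ioi h12,
      setIntegral_union Ioc_disjoint_Ioi_same measurableSet_Ioi hIL12 hIT,
      ← Ioc_union_Ioc_eq_Ioc h1m hmm,
      setIntegral_union (Ioc_disjoint_Ioc_of_le le_rfl) measurableSet_Ioc hIL1 hIM]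
  have hValL1 : ∫ y in Ioc (1:ℝ) (x-2), gL y =
      Gaux (x+1) (-1) (Real.log (1+x)) (x-2) - Gaux (x+1) (-1) (Real.log (1+x)) 1 := by
    rw [setIntegral_congr_fun measurableSet_Ioc hEqL1, (ftcL1 x hx).2]
  have hValT : ∫ y in Ioi (x+2), gL y = 0 - Gaux (1-x) 1 (Real.log (1+x)) (x+2) := by
    rw [setIntegral_congr_fun measurableSet_Ioi hEqT, (ftcT x hx).2]
  -- assemble
  rw [hSet, setIntegral_union ((Iic_disjoint_Ioi (le_of_lt (by norm_num : (-1:ℝ) < 1))).mono_left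
    Iio_subset_Iic_self) measurableSet_Ioi hILeft hIR,
    hValR, hLeftVal, hsplitL, hValL1, hValT]
  ring

lemma hAlim : Tendsto (fun x : ℝ => (1+x) *
    ((0 - Gaux (x+1) 1 (Real.log (1+x)) 1)
      + ((Gaux (x+1) (-1) (Real.log (1+x)) (x-2) - Gaux (x+1) (-1) (Real.log (1+x)) 1)
        + (0 - Gaux (1-x) 1 (Real.log (1+x)) (x+2))))) atTop (nhds 0) := by
  have t1 := HT1'
  have t2 : Tendsto (fun x : ℝ => Real.log (x+2) - Real.log x) atTop (nhds 0) := by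
    simpa using H1' 2 0
  have t3 : Tendsto (fun x : ℝ =>
      Real.log 3 * (1 + (x+1)/(x+2) - (x+1)/(x-2) - (x+1)/(x-1))) atTop (nhds 0) := by
    have h := (((H3' 1 2).const_add 1).sub (H3' 1 (-2))).sub (H3' 1 (-1))
    rw [show (1:ℝ) + 1 - 1 - 1 = 0 by norm_num] at h
    have h2 := h.const_mul (Real.log 3)
    rw [mul_zero] at h2
    simpa [sub_eq_add_neg] using h2
  have t4a : Tendsto (fun x : ℝ => Real.log (x+1) - Real.log (x-2)) atTop (nhds 0) := by
    simpa [sub_eq_add_neg] using H1' 1 (-2)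
  have t4b : Tendsto (fun x : ℝ => 3 * (Real.log (x+1)/(x-2))) atTop (nhds 0) := by
    have := (H2' 1 (-2)).const_mul 3
    rw [mul_zero] at this
    simpa [sub_eq_add_neg] using this
  have t5a : Tendsto (fun x : ℝ => 2 * (Real.log (x+2)/(x-1))) atTop (nhds 0) := by
    have := (H2' 2 (-1)).const_mul 2
    rw [mul_zero] at this
    simpa [sub_eq_add_neg] using this
  have t5b : Tendsto (fun x : ℝ => Real.log (x+2) - Real.log (x+1)) atTop (nhds 0) := H1' 2 1
  have t5c : Tendsto (fun x : ℝ => Real.log (x+1)/(x+2)) atTop (nhds 0) := H2' 1 2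
  have hsum := ((((((t1.add t2).add t3).add t4a).add t4b).add t5a).add t5b).add t5c
  simp only [add_zero] at hsum
  apply hsum.congr'
  filter_upwards [eventually_gt_atTop 3] with x hx
  have e1 : x+1 ≠ 0 := by linarith
  have e2 : x-2 ≠ 0 := by intro h; nlinarith [h]
  have e3 : x-1 ≠ 0 := by intro h; nlinarith [h]
  have e4 : x+2 ≠ 0 := by linarith
  have e5 : 1-x ≠ 0 := by intro h; nlinarith [h]
  simp only [Gaux]
  rw [show x+1+1*1 = x+2 by ring, show x+1+(-1)*(x-2) = (3:ℝ) by ring,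
    show x+1+(-1)*1 = x by ring, show 1-x+1*(x+2) = (3:ℝ) by ring,
    show (1:ℝ)+x = x+1 by ring, Real.log_one]
  field_simp
  ring

lemma hMlim (φ : ℝ → ℝ) (hcont : Continuous φ) (hφ0 : ∀ z, 0 ≤ φ z)
    (hφ1 : ∀ z, 1 < |z| → φ z = |z|) (hφ2 : ∀ z, |z| ≤ 1 → φ z ≤ |z|) :
    Tendsto (fun x : ℝ => (1+x) *
      ∫ y in Ioc (x-2) (x+2), (Real.log (1 + φ (x - y)) - Real.log (1 + x)) / y ^ 2)
      atTop (nhds 0) := by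
  have hB : Tendsto (fun x : ℝ => (1+x) * (Real.log (1+x)/(x-2)^2 * 4)) atTop (nhds 0) := by
    have := ((H3' 1 (-2)).mul (H2' 1 (-2))).const_mul 4
    rw [one_mul, mul_zero] at this
    apply this.congr'
    filter_upwards [eventually_gt_atTop 3] with x hx
    have e2 : x + -2 ≠ 0 := by intro h; nlinarith [h]
    rw [show (1:ℝ)+x = x+1 by ring, show x-2 = x + -2 by ring]
    field_simp
  apply squeeze_zero_norm' _ hB
  filter_upwards [eventually_gt_atTop 3] with x hx
  have hx2 : (0:ℝ) < x - 2 := by linarith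
  have hlogx : 0 ≤ Real.log (1+x) := Real.log_nonneg (by linarith)
  have hMb : ‖∫ y in Ioc (x-2) (x+2), (Real.log (1 + φ (x - y)) - Real.log (1 + x)) / y ^ 2‖
      ≤ Real.log (1+x)/(x-2)^2 * 4 := by
    have hbd : ∀ y ∈ Ioc (x-2) (x+2),
        ‖(Real.log (1 + φ (x - y)) - Real.log (1 + x)) / y ^ 2‖ ≤ Real.log (1+x)/(x-2)^2 := by
      intro y hy
      have hy1 : x - 2 < y := hy.1
      have hy2 : y ≤ x + 2 := hy.2
      have habs : |x - y| ≤ 2 := abs_le.mpr ⟨by linarith, by linarith⟩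
      have hφb : φ (x - y) ≤ 2 := by
        by_cases h : |x - y| ≤ 1
        · linarith [hφ2 _ h]
        · push_neg at h
          rw [hφ1 _ h]; exact habs
      have hnum0 : 0 ≤ Real.log (1 + φ (x - y)) := Real.log_nonneg (by linarith [hφ0 (x-y)])
      have hnum1 : Real.log (1 + φ (x - y)) ≤ Real.log (1+x) :=
        Real.log_le_log (by linarith [hφ0 (x-y)]) (by linarith)
      rw [norm_div, Real.norm_eq_abs, Real.norm_eq_abs, abs_of_nonpos (by linarith),
        abs_of_nonneg (sq_nonneg y)]
      apply div_le_div₀ hlogx (by linarith) (by positivity)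
      nlinarith [hy1, hx2]
    have := norm_setIntegral_le_of_norm_le_const
      (show volume (Ioc (x-2) (x+2)) < ⊤ from measure_Ioc_lt_top) hbd
    rw [measureReal_def, Real.volume_Ioc, ENNReal.toReal_ofReal (by linarith)] at this
    calc ‖∫ y in Ioc (x-2) (x+2), (Real.log (1 + φ (x - y)) - Real.log (1 + x)) / y ^ 2‖
        ≤ Real.log (1+x)/(x-2)^2 * (x + 2 - (x - 2)) := this
      _ = Real.log (1+x)/(x-2)^2 * 4 := by ring_nf
  rw [norm_mul, Real.norm_eq_abs (1+x), abs_of_pos (by linarith : (0:ℝ) < 1+x)]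
  exact mul_le_mul_of_nonneg_left hMb (by linarith)

/-- Equation (3.11): if `φ : ℝ → [0,∞)` is continuous with `φ(z) = |z|` for
`|z| > 1` and `φ(z) ≤ |z|` for `|z| ≤ 1`, then
`(1+x) ∫_{|y|>1} (ln(1+φ(x+y)) − ln(1+x)) y^{−2} dy → 0` as `x → ∞`. -/
theorem stmt_12 (φ : ℝ → ℝ) (hcont : Continuous φ) (hφ0 : ∀ z, 0 ≤ φ z)
    (hφ1 : ∀ z, 1 < |z| → φ z = |z|) (hφ2 : ∀ z, |z| ≤ 1 → φ z ≤ |z|) :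
    Tendsto
      (fun x : ℝ => (1 + x) *
        ∫ y in {y : ℝ | 1 < |y|},
          (Real.log (1 + φ (x + y)) - Real.log (1 + x)) / y ^ 2)
      atTop (nhds 0) := by
  have hsum := hAlim.add (hMlim φ hcont hφ0 hφ1 hφ2)
  rw [add_zero] at hsum
  apply hsum.congr'
  filter_upwards [eventually_gt_atTop 3] with x hx
  rw [key_lemma φ hcont hφ0 hφ1 hφ2 x hx]
  ring
end

section
/- For every α > 0 and every real x > 1, α·(1+x)^{α} · ∫_{1+x}^∞ ln( (y−x+1)/(1+x) ) · y^{−α−1} dy = ln( 2/(1+x) ) + ∫_0^1 t^{α−1} · ( 1 − t·(x−1)/(1+x) )^{−1} dt. -/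
open Real MeasureTheory Set Filter Topology

/-- Integration-by-parts identity from Step 4 of the proof of Theorem 1.1(i):
for `α > 0` and `x > 1`,
`α(1+x)^α ∫_{1+x}^∞ ln((y−x+1)/(1+x)) y^{−α−1} dy
  = ln(2/(1+x)) + ∫_0^1 t^{α−1} (1 − t(x−1)/(1+x))^{−1} dt`. -/
theorem stmt_13 (α : ℝ) (hα : 0 < α) (x : ℝ) (hx : 1 < x) :
    α * (1 + x) ^ α *
        ∫ y in Set.Ioi (1 + x),
          Real.log ((y - x + 1) / (1 + x)) * y ^ (-α - 1)
      = Real.log (2 / (1 + x)) +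
        ∫ t in (0:ℝ)..1, t ^ (α - 1) * (1 - t * (x - 1) / (1 + x))⁻¹ := by
  set a : ℝ := 1 + x with ha_def
  have ha2 : (2:ℝ) < a := by rw [ha_def]; linarith
  have ha : (0:ℝ) < a := by linarith
  have hα' : α ≠ 0 := hα.ne'
  have hyx : ∀ y ∈ Ioi a, (0:ℝ) < y - x + 1 := by
    intro y hy
    have h : a < y := hy
    rw [ha_def] at h; linarith
  have hy0 : ∀ y ∈ Ioi a, (0:ℝ) < y := fun y hy => lt_trans ha hy
  -- derivative of u
  have hu : ∀ y ∈ Ioi a, HasDerivAt (fun y => Real.log ((y - x + 1) / a))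
      ((y - x + 1)⁻¹) y := by
    intro y hy
    have hp := hyx y hy
    have h1 : HasDerivAt (fun y : ℝ => (y - x + 1) / a) (1 / a) y := by
      simpa using (((hasDerivAt_id y).sub_const x).add_const 1).div_const a
    have hne : (y - x + 1) / a ≠ 0 := by positivity
    have h2 := (Real.hasDerivAt_log hne).comp y h1
    refine h2.congr_deriv ?_
    rw [inv_div]
    field_simp
  -- derivative of v
  have hv : ∀ y ∈ Ioi a, HasDerivAt (fun y : ℝ => -α⁻¹ * y ^ (-α))
      (y ^ (-α - 1)) y := by
    intro y hy
    have hy' : y ≠ 0 := (hy0 y hy).ne'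
    have h1 := (Real.hasDerivAt_rpow_const (p := -α) (Or.inl hy')).const_mul (-α⁻¹)
    refine h1.congr_deriv ?_
    field_simp
  -- integrability of u' * v
  have hu'v : IntegrableOn (fun y => (y - x + 1)⁻¹ * (-α⁻¹ * y ^ (-α))) (Ioi a) := by
    have hbig : IntegrableOn (fun y : ℝ => a / 2 * α⁻¹ * y ^ (-α - 1)) (Ioi a) :=
      (integrableOn_Ioi_rpow_of_lt (by linarith) ha).const_mul _
    refine Integrable.mono hbig ?_ ?_
    · apply ContinuousOn.aestronglyMeasurable ?_ measurableSet_Ioi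
      apply ContinuousOn.mul
      · exact ContinuousOn.inv₀ (by fun_prop) (fun y hy => (hyx y hy).ne')
      · exact ContinuousOn.mul continuousOn_const
          (fun y hy => (Real.continuousAt_rpow_const y (-α)
            (Or.inl (hy0 y hy).ne')).continuousWithinAt)
    · rw [ae_restrict_iff' measurableSet_Ioi]
      refine ae_of_all _ (fun y hy => ?_)
      have hyp := hy0 y hy
      have hxp := hyx y hy
      have hkey : 2 * y / a ≤ y - x + 1 := by
        have h : a < y := hy
        rw [ha_def] at h ⊢
        rw [div_le_iff₀ (by linarith : (0:ℝ) < 1 + x)]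
        nlinarith
      have h1 : (y - x + 1)⁻¹ ≤ a / 2 * y⁻¹ := by
        have he : a / 2 * y⁻¹ = (2 * y / a)⁻¹ := by
          field_simp
        rw [he]
        exact inv_anti₀ (by positivity) hkey
      have h2 : y ^ (-α - 1) = y⁻¹ * y ^ (-α) := by
        rw [show -α - 1 = -1 + -α by ring, Real.rpow_add hyp, Real.rpow_neg_one]
      have e1 : ‖(y - x + 1)⁻¹ * (-α⁻¹ * y ^ (-α))‖
          = (y - x + 1)⁻¹ * (α⁻¹ * y ^ (-α)) := by
        rw [Real.norm_eq_abs, abs_mul, abs_mul, abs_neg,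
          abs_of_pos (inv_pos.mpr hxp), abs_of_pos (inv_pos.mpr hα),
          abs_of_nonneg (Real.rpow_nonneg hyp.le _)]
      have e2 : ‖a / 2 * α⁻¹ * y ^ (-α - 1)‖ = a / 2 * α⁻¹ * y ^ (-α - 1) := by
        rw [Real.norm_eq_abs, abs_of_nonneg]
        have hq := Real.rpow_nonneg hyp.le (-α - 1)
        positivity
      rw [e1, e2, h2]
      calc (y - x + 1)⁻¹ * (α⁻¹ * y ^ (-α))
          ≤ a / 2 * y⁻¹ * (α⁻¹ * y ^ (-α)) := by
            apply mul_le_mul_of_nonneg_right h1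
            have hq := Real.rpow_nonneg hyp.le (-α)
            positivity
        _ = a / 2 * α⁻¹ * (y⁻¹ * y ^ (-α)) := by ring
  -- integrability of u * v'
  have huv' : IntegrableOn (fun y => Real.log ((y - x + 1) / a) * y ^ (-α - 1)) (Ioi a) := by
    have hbig : IntegrableOn (fun y : ℝ =>
        2 / α * a ^ (-(α / 2)) * y ^ (-(α / 2) - 1) + |Real.log (2 / a)| * y ^ (-α - 1))
        (Ioi a) := by
      refine Integrable.add ?_ ?_
      · exact (integrableOn_Ioi_rpow_of_lt (by linarith) ha).const_mul _
      · exact (integrableOn_Ioi_rpow_of_lt (by linarith) ha).const_mul _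
    refine Integrable.mono hbig ?_ ?_
    · apply ContinuousOn.aestronglyMeasurable ?_ measurableSet_Ioi
      apply ContinuousOn.mul
      · exact ContinuousOn.log (by fun_prop)
          (fun y hy => by have := hyx y hy; positivity)
      · exact fun y hy => (Real.continuousAt_rpow_const y (-α - 1)
          (Or.inl (hy0 y hy).ne')).continuousWithinAt
    · rw [ae_restrict_iff' measurableSet_Ioi]
      refine ae_of_all _ (fun y hy => ?_)
      have hyp := hy0 y hy
      have hxp := hyx y hy
      set z : ℝ := (y - x + 1) / a with hz_def
      have hzpos : 0 < z := by positivity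
      have hz2 : 2 / a ≤ z := by
        rw [hz_def, div_le_div_iff₀ ha ha]
        have h : a < y := hy
        rw [ha_def] at h ⊢; nlinarith
      have hzy : z ≤ y / a := by
        rw [hz_def, div_le_div_iff₀ ha ha]
        have h : a < y := hy
        rw [ha_def] at h ⊢; nlinarith
      have hlog : |Real.log z| ≤ 2 / α * (y / a) ^ (α / 2) + |Real.log (2 / a)| := by
        rcases le_or_gt 1 z with h1 | h1
        · rw [abs_of_nonneg (Real.log_nonneg h1)]
          have hb : Real.log z ≤ 2 / α * z ^ (α / 2) := by
            have h0 := Real.log_le_sub_one_of_pos (Real.rpow_pos_of_pos hzpos (α / 2))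
            rw [Real.log_rpow hzpos] at h0
            have h3 : α / 2 * Real.log z ≤ z ^ (α / 2) := by linarith
            calc Real.log z = 2 / α * (α / 2 * Real.log z) := by field_simp
              _ ≤ 2 / α * z ^ (α / 2) := by
                  apply mul_le_mul_of_nonneg_left h3; positivity
          have hmono : z ^ (α / 2) ≤ (y / a) ^ (α / 2) :=
            Real.rpow_le_rpow hzpos.le hzy (by positivity)
          have h4 : 2 / α * z ^ (α / 2) ≤ 2 / α * (y / a) ^ (α / 2) := by
            apply mul_le_mul_of_nonneg_left hmono; positivity
          have h5 : (0:ℝ) ≤ |Real.log (2 / a)| := abs_nonneg _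
          linarith
        · have hlz : Real.log z < 0 := Real.log_neg hzpos h1
          rw [abs_of_neg hlz]
          have h2a : (0:ℝ) < 2 / a := by positivity
          have hlog2a : Real.log (2 / a) < 0 :=
            Real.log_neg h2a (by rw [div_lt_one ha]; linarith)
          have h6 : Real.log (2 / a) ≤ Real.log z := Real.log_le_log h2a hz2
          have h7 : (0:ℝ) ≤ 2 / α * (y / a) ^ (α / 2) := by positivity
          rw [abs_of_neg hlog2a]
          linarith
      have hrp : (0:ℝ) ≤ y ^ (-α - 1) := Real.rpow_nonneg hyp.le _
      have e1 : ‖Real.log z * y ^ (-α - 1)‖ = |Real.log z| * y ^ (-α - 1) := by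
        rw [Real.norm_eq_abs, abs_mul, abs_of_nonneg hrp]
      have e2 : ‖2 / α * a ^ (-(α / 2)) * y ^ (-(α / 2) - 1) +
          |Real.log (2 / a)| * y ^ (-α - 1)‖ =
          2 / α * a ^ (-(α / 2)) * y ^ (-(α / 2) - 1) + |Real.log (2 / a)| * y ^ (-α - 1) := by
        rw [Real.norm_eq_abs, abs_of_nonneg]
        have q1 : (0:ℝ) ≤ y ^ (-(α / 2) - 1) := Real.rpow_nonneg hyp.le _
        have q2 : (0:ℝ) ≤ a ^ (-(α / 2)) := Real.rpow_nonneg ha.le _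
        have q3 : (0:ℝ) ≤ |Real.log (2 / a)| := abs_nonneg _
        positivity
      rw [e1, e2]
      have key : (y / a) ^ (α / 2) * y ^ (-α - 1) = a ^ (-(α / 2)) * y ^ (-(α / 2) - 1) := by
        rw [Real.div_rpow hyp.le ha.le, div_mul_eq_mul_div, div_eq_mul_inv,
          ← Real.rpow_neg ha.le, ← Real.rpow_add hyp]
        ring_nf
      calc |Real.log z| * y ^ (-α - 1)
          ≤ (2 / α * (y / a) ^ (α / 2) + |Real.log (2 / a)|) * y ^ (-α - 1) :=
            mul_le_mul_of_nonneg_right hlog hrp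
        _ = 2 / α * ((y / a) ^ (α / 2) * y ^ (-α - 1)) + |Real.log (2 / a)| * y ^ (-α - 1) := by
            ring
        _ = 2 / α * a ^ (-(α / 2)) * y ^ (-(α / 2) - 1) + |Real.log (2 / a)| * y ^ (-α - 1) := by
            rw [key]; ring
  -- boundary limit at a
  have h_zero : Tendsto (fun y => Real.log ((y - x + 1) / a) * (-α⁻¹ * y ^ (-α)))
      (𝓝[>] a) (𝓝 (Real.log (2 / a) * (-α⁻¹ * a ^ (-α)))) := by
    have hc : ContinuousAt (fun y => Real.log ((y - x + 1) / a) * (-α⁻¹ * y ^ (-α))) a := by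
      apply ContinuousAt.mul
      · apply ContinuousAt.log (by fun_prop)
        have h2 : a - x + 1 = 2 := by rw [ha_def]; ring
        rw [h2]; positivity
      · exact (Real.continuousAt_rpow_const a (-α) (Or.inl ha.ne')).const_mul _
    have h2 : a - x + 1 = 2 := by rw [ha_def]; ring
    have he : Real.log (2 / a) * (-α⁻¹ * a ^ (-α)) =
        (fun y => Real.log ((y - x + 1) / a) * (-α⁻¹ * y ^ (-α))) a := by
      simp [h2]
    rw [he]
    exact hc.continuousWithinAt
  -- limit at infinity
  have h_infty : Tendsto (fun y => Real.log ((y - x + 1) / a) * (-α⁻¹ * y ^ (-α)))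
      atTop (𝓝 0) := by
    have hbase : Tendsto (fun y : ℝ => Real.log ((y - x + 1) / a) * y ^ (-α)) atTop (𝓝 0) := by
      have hupper : Tendsto (fun y : ℝ => Real.log y / y ^ α) atTop (𝓝 0) :=
        (isLittleO_log_rpow_atTop hα).tendsto_div_nhds_zero
      apply tendsto_of_tendsto_of_tendsto_of_le_of_le' tendsto_const_nhds hupper
      · filter_upwards [eventually_ge_atTop (2 * x)] with y hy
        have hyp : (0:ℝ) < y := by linarith
        have hy1 : (1:ℝ) ≤ (y - x + 1) / a := by
          rw [le_div_iff₀ ha, ha_def]; linarith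
        have q1 : 0 ≤ Real.log ((y - x + 1) / a) := Real.log_nonneg hy1
        have q2 : 0 ≤ y ^ (-α) := Real.rpow_nonneg hyp.le _
        positivity
      · filter_upwards [eventually_ge_atTop (max 1 (2 * x))] with y hy
        have hy1 : (1:ℝ) ≤ y := le_trans (le_max_left _ _) hy
        have hy2 : 2 * x ≤ y := le_trans (le_max_right _ _) hy
        have hyp : (0:ℝ) < y := by linarith
        have harg : (0:ℝ) < (y - x + 1) / a := by
          have hq : (0:ℝ) < y - x + 1 := by linarith
          positivity
        have hle : (y - x + 1) / a ≤ y := by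
          rw [div_le_iff₀ ha, ha_def]; nlinarith
        have hlog : Real.log ((y - x + 1) / a) ≤ Real.log y := Real.log_le_log harg hle
        have q2 : 0 ≤ y ^ (-α) := Real.rpow_nonneg hyp.le _
        calc Real.log ((y - x + 1) / a) * y ^ (-α)
            ≤ Real.log y * y ^ (-α) := mul_le_mul_of_nonneg_right hlog q2
          _ = Real.log y / y ^ α := by
              rw [Real.rpow_neg hyp.le, div_eq_mul_inv]
    have heq : (fun y => Real.log ((y - x + 1) / a) * (-α⁻¹ * y ^ (-α)))
        = fun y => -α⁻¹ * (Real.log ((y - x + 1) / a) * y ^ (-α)) := by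
      funext y; ring
    rw [heq]
    simpa using hbase.const_mul (-α⁻¹)
  -- integration by parts
  have hibp : ∫ y in Ioi a, Real.log ((y - x + 1) / a) * y ^ (-α - 1)
      = 0 - Real.log (2 / a) * (-α⁻¹ * a ^ (-α))
        - ∫ y in Ioi a, (y - x + 1)⁻¹ * (-α⁻¹ * y ^ (-α)) :=
    integral_Ioi_mul_deriv_eq_deriv_mul hu hv huv' hu'v h_zero h_infty
  -- pull out the constant
  have hconst : ∫ y in Ioi a, (y - x + 1)⁻¹ * (-α⁻¹ * y ^ (-α))
      = -α⁻¹ * ∫ y in Ioi a, (y - x + 1)⁻¹ * y ^ (-α) := by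
    rw [← integral_const_mul]
    congr 1
    funext y; ring
  -- change of variables
  have himg : (fun t : ℝ => a / t) '' Ioo 0 1 = Ioi a := by
    ext y
    constructor
    · rintro ⟨t, ⟨ht0, ht1⟩, rfl⟩
      have hq : a < a / t := by rw [lt_div_iff₀ ht0]; nlinarith
      exact hq
    · intro hy
      have hy' : a < y := hy
      refine ⟨a / y, ⟨div_pos ha (lt_trans ha hy'), ?_⟩, ?_⟩
      · rw [div_lt_one (by linarith)]; exact hy'
      · field_simp
  have hderiv : ∀ t ∈ Ioo (0:ℝ) 1,
      HasDerivWithinAt (fun t : ℝ => a / t) (-a / t ^ 2) (Ioo 0 1) t := by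
    intro t ht
    have ht0 : (0:ℝ) < t := ht.1
    have h1 : HasDerivAt (fun t : ℝ => a / t) (-a / t ^ 2) t := by
      have h2 := (hasDerivAt_inv ht0.ne').const_mul a
      have h3 : HasDerivAt (fun t : ℝ => a / t) (a * -(t ^ 2)⁻¹) t := by
        simpa [div_eq_mul_inv] using h2
      convert h3 using 1
      ring
    exact h1.hasDerivWithinAt
  have hinj : InjOn (fun t : ℝ => a / t) (Ioo 0 1) := by
    intro s hs t ht h
    simp only at h
    rw [div_eq_div_iff hs.1.ne' ht.1.ne'] at h
    exact (mul_left_cancel₀ ha.ne' h).symm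
  have hchg : ∫ y in Ioi a, (y - x + 1)⁻¹ * y ^ (-α)
      = ∫ t in Ioo (0:ℝ) 1, |(-a / t ^ 2)| • ((a / t - x + 1)⁻¹ * (a / t) ^ (-α)) := by
    rw [← himg]
    exact integral_image_eq_integral_abs_deriv_smul measurableSet_Ioo hderiv hinj _
  have hpt : ∀ t ∈ Ioo (0:ℝ) 1, |(-a / t ^ 2)| • ((a / t - x + 1)⁻¹ * (a / t) ^ (-α))
      = a ^ (-α) * (t ^ (α - 1) * (1 - t * (x - 1) / a)⁻¹) := by
    intro t ht
    obtain ⟨ht0, ht1⟩ := ht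
    have hD : 0 < a - t * (x - 1) := by rw [ha_def]; nlinarith
    have habs : |(-a / t ^ 2)| = a / t ^ 2 := by
      rw [abs_div, abs_neg, abs_of_pos ha, abs_of_pos (by positivity : (0:ℝ) < t ^ 2)]
    have hq : a / t - x + 1 = (a - t * (x - 1)) / t := by field_simp; ring
    have hr1 : (a / t) ^ (-α) = a ^ (-α) * t ^ α := by
      rw [Real.rpow_neg (by positivity), Real.div_rpow ha.le ht0.le, inv_div,
        Real.rpow_neg ha.le, div_eq_mul_inv]
      ring
    have hr2 : t ^ (α - 1) = t ^ α / t := by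
      rw [Real.rpow_sub ht0, Real.rpow_one]
    have h1 : (1 - t * (x - 1) / a) = (a - t * (x - 1)) / a := by field_simp
    rw [smul_eq_mul, habs, hq, inv_div, hr1, hr2, h1, inv_div]
    field_simp
  have hsub2 : ∫ y in Ioi a, (y - x + 1)⁻¹ * y ^ (-α)
      = a ^ (-α) * ∫ t in Ioo (0:ℝ) 1, t ^ (α - 1) * (1 - t * (x - 1) / a)⁻¹ := by
    rw [hchg, setIntegral_congr_fun measurableSet_Ioo hpt, integral_const_mul]
  have hio : ∫ t in (0:ℝ)..1, t ^ (α - 1) * (1 - t * (x - 1) / a)⁻¹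
      = ∫ t in Ioo (0:ℝ) 1, t ^ (α - 1) * (1 - t * (x - 1) / a)⁻¹ := by
    rw [intervalIntegral.integral_of_le zero_le_one, integral_Ioc_eq_integral_Ioo]
  -- assemble
  rw [hibp, hconst, hsub2, hio]
  have haa : a ^ α * a ^ (-α) = 1 := by
    rw [← Real.rpow_add ha]; simp
  set K := ∫ t in Ioo (0:ℝ) 1, t ^ (α - 1) * (1 - t * (x - 1) / a)⁻¹ with hK
  calc α * a ^ α * (0 - Real.log (2 / a) * (-α⁻¹ * a ^ (-α)) - -α⁻¹ * (a ^ (-α) * K))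
      = (α * α⁻¹) * ((a ^ α * a ^ (-α)) * (Real.log (2 / a) + K)) := by ring
    _ = Real.log (2 / a) + K := by rw [haa, mul_inv_cancel₀ hα']; ring
end

section
/- For every α ∈ (0,2), lim_{θ→0+} [ 2/θ − (α/θ)·Σ_{i=1}^∞ C(−θ,2i)·(2/(2i−α)) − (α/θ)·∫_0^1 t^{α+θ−1}·( (1+t)^{−θ} + (1−t)^{−θ} ) dt ] = π·cot(πα/2), where C(−θ,k) := (−θ)(−θ−1)⋯(−θ−k+1)/k! is the generalized binomial coefficient. -/
open Filter Real MeasureTheory Topology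
set_option maxHeartbeats 1000000


/-- The generalized binomial coefficient `C(θ,k) = θ(θ−1)⋯(θ−k+1)/k!`. -/
noncomputable def genBinom (θ : ℝ) (k : ℕ) : ℝ :=
  (∏ j ∈ Finset.range k, (θ - j)) / (Nat.factorial k)

noncomputable def qfun (i : ℕ) (θ : ℝ) : ℝ :=
  (∏ j ∈ Finset.range (2*i+1), (θ + (j:ℝ) + 1)) / ((2*i+2).factorial : ℝ)

lemma genBinom_eq_q (θ : ℝ) (i : ℕ) : genBinom (-θ) (2*(i+1)) = θ * qfun i θ := by
  have h2 : 2*(i+1) = (2*i+1)+1 := by ring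
  rw [genBinom, qfun, h2, Finset.prod_range_succ']
  have h3 : (∏ j ∈ Finset.range (2*i+1), (-θ - ((j+1 : ℕ) : ℝ))) =
      (-1)^(2*i+1) * ∏ j ∈ Finset.range (2*i+1), (θ + (j:ℝ) + 1) := by
    rw [show ((-1:ℝ))^(2*i+1) = ∏ _x ∈ Finset.range (2*i+1), (-1:ℝ) by
      rw [Finset.prod_const, Finset.card_range], ← Finset.prod_mul_distrib]
    apply Finset.prod_congr rfl
    intro j _
    push_cast
    ring
  push_cast at h3 ⊢
  rw [h3, Odd.neg_one_pow ⟨i, by ring⟩]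
  have : ((2*i+1+1).factorial : ℝ) = ((2*i+2).factorial : ℝ) := by norm_num
  rw [this]
  field_simp
  ring

lemma qfun_continuous (i : ℕ) : Continuous (fun θ : ℝ => qfun i θ) := by
  unfold qfun
  apply Continuous.div_const
  apply continuous_finset_prod
  intro j _
  continuity

lemma qfun_zero (i : ℕ) : qfun i 0 = 1/(2*(i:ℝ)+2) := by
  unfold qfun
  have h1 : (∏ j ∈ Finset.range (2*i+1), ((0:ℝ) + (j:ℝ) + 1)) = ((2*i+1).factorial : ℝ) := by
    rw [← Finset.prod_range_add_one_eq_factorial (2*i+1), Nat.cast_prod]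
    apply Finset.prod_congr rfl
    intro j _
    push_cast
    ring
  rw [h1]
  have h2 : ((2*i+2).factorial : ℝ) = (2*(i:ℝ)+2) * ((2*i+1).factorial : ℝ) := by
    have : (2*i+2) = (2*i+1)+1 := by ring
    rw [this, Nat.factorial_succ]
    push_cast
    ring
  rw [h2]
  have hf : ((2*i+1).factorial : ℝ) ≠ 0 := by positivity
  field_simp

lemma exp_half_le_two : Real.exp (1/2) ≤ 2 := by
  have h1 : Real.exp (1/2) * Real.exp (1/2) = Real.exp 1 := by
    rw [← Real.exp_add]; norm_num
  have h2 := Real.exp_one_lt_d9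
  have h3 := Real.exp_pos (1/2 : ℝ)
  nlinarith

lemma qfun_bound (i : ℕ) {θ : ℝ} (h0 : 0 < θ) (h1 : θ ≤ 1/2) :
    qfun i θ ≤ 2 / Real.sqrt ((i:ℝ)+1) := by
  set m : ℕ := 2*i+1 with hm
  have hm1 : 1 ≤ (m:ℝ) := by exact_mod_cast Nat.one_le_iff_ne_zero.mpr (by omega)
  have hmpos : (0:ℝ) < m := by linarith
  have hlogm : 0 ≤ Real.log m := Real.log_nonneg hm1
  -- Step A : product bound
  have hA : (∏ j ∈ Finset.range m, (θ + (j:ℝ) + 1)) ≤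
      (m.factorial : ℝ) * Real.exp (θ * ((harmonic m : ℚ) : ℝ)) := by
    have hle : ∀ j ∈ Finset.range m, θ + (j:ℝ) + 1 ≤ ((j:ℝ)+1) * Real.exp (θ/((j:ℝ)+1)) := by
      intro j _
      have hj : (0:ℝ) < (j:ℝ)+1 := by positivity
      have h2 := Real.add_one_le_exp (θ/((j:ℝ)+1))
      have h3 : ((j:ℝ)+1) * (θ/((j:ℝ)+1) + 1) ≤ ((j:ℝ)+1) * Real.exp (θ/((j:ℝ)+1)) :=
        mul_le_mul_of_nonneg_left h2 hj.le
      calc θ + (j:ℝ) + 1 = ((j:ℝ)+1) * (θ/((j:ℝ)+1) + 1) := by field_simp; ring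
        _ ≤ ((j:ℝ)+1) * Real.exp (θ/((j:ℝ)+1)) := h3
    calc (∏ j ∈ Finset.range m, (θ + (j:ℝ) + 1))
        ≤ ∏ j ∈ Finset.range m, ((j:ℝ)+1) * Real.exp (θ/((j:ℝ)+1)) := by
          apply Finset.prod_le_prod
          · intro j _; positivity
          · exact hle
      _ = (∏ j ∈ Finset.range m, ((j:ℝ)+1)) * ∏ j ∈ Finset.range m, Real.exp (θ/((j:ℝ)+1)) :=
          Finset.prod_mul_distrib
      _ = (m.factorial : ℝ) * Real.exp (∑ j ∈ Finset.range m, θ/((j:ℝ)+1)) := by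
          rw [← Real.exp_sum]
          congr 1
          rw [← Finset.prod_range_add_one_eq_factorial m, Nat.cast_prod]
          apply Finset.prod_congr rfl
          intro j _
          push_cast; ring
      _ = (m.factorial : ℝ) * Real.exp (θ * ((harmonic m : ℚ) : ℝ)) := by
          congr 2
          have hh : ((harmonic m : ℚ) : ℝ) = ∑ j ∈ Finset.range m, ((j:ℝ)+1)⁻¹ := by
            rw [harmonic]
            push_cast
            rfl
          rw [hh, Finset.mul_sum]
          apply Finset.sum_congr rfl
          intro j _
          rw [div_eq_mul_inv]
  -- Step B : exponential bound
  have hB : Real.exp (θ * ((harmonic m : ℚ) : ℝ)) ≤ Real.exp (1/2) * Real.sqrt m := by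
    have hharm : ((harmonic m : ℚ) : ℝ) ≤ 1 + Real.log m := harmonic_le_one_add_log m
    have hharm0 : (0:ℝ) ≤ ((harmonic m : ℚ) : ℝ) := by
      have := harmonic_pos (n := m) (by omega)
      have : (0:ℚ) ≤ harmonic m := le_of_lt this
      exact_mod_cast this
    have h4 : θ * ((harmonic m : ℚ) : ℝ) ≤ (1/2) * (1 + Real.log m) := by nlinarith
    calc Real.exp (θ * ((harmonic m : ℚ) : ℝ)) ≤ Real.exp ((1/2) * (1 + Real.log m)) :=
          Real.exp_le_exp.mpr h4
      _ = Real.exp (1/2) * Real.exp (Real.log m * (1/2)) := by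
          rw [← Real.exp_add]; ring_nf
      _ = Real.exp (1/2) * (m:ℝ) ^ ((1:ℝ)/2) := by
          rw [← Real.rpow_def_of_pos hmpos]
      _ = Real.exp (1/2) * Real.sqrt m := by
          rw [Real.sqrt_eq_rpow]
  -- combine
  have hfacpos : (0:ℝ) < (m.factorial : ℝ) := by positivity
  have hfacpos2 : (0:ℝ) < ((2*i+2).factorial : ℝ) := by positivity
  have hqle : qfun i θ ≤ ((m.factorial : ℝ) * (Real.exp (1/2) * Real.sqrt m)) / ((2*i+2).factorial : ℝ) := by
    rw [qfun]
    apply (div_le_div_iff_of_pos_right hfacpos2).mpr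
    calc (∏ j ∈ Finset.range (2*i+1), (θ + (j:ℝ) + 1))
        ≤ (m.factorial : ℝ) * Real.exp (θ * ((harmonic m : ℚ) : ℝ)) := hA
      _ ≤ (m.factorial : ℝ) * (Real.exp (1/2) * Real.sqrt m) :=
          mul_le_mul_of_nonneg_left hB hfacpos.le
  have hfr : ((2*i+2).factorial : ℝ) = ((m:ℝ)+1) * (m.factorial : ℝ) := by
    have h5 : 2*i+2 = m+1 := by omega
    rw [h5, Nat.factorial_succ]
    push_cast
    ring
  have hqle2 : qfun i θ ≤ (Real.exp (1/2) * Real.sqrt m) / ((m:ℝ)+1) := by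
    rw [hfr] at hqle
    calc qfun i θ ≤ ((m.factorial : ℝ) * (Real.exp (1/2) * Real.sqrt m)) / (((m:ℝ)+1) * (m.factorial : ℝ)) := hqle
      _ = (Real.exp (1/2) * Real.sqrt m) / ((m:ℝ)+1) := by
          rw [mul_comm ((m.factorial : ℝ)) _, mul_div_assoc]
          congr 1
          rw [mul_comm (((m:ℝ)+1)) _, div_mul_eq_div_div, div_self (ne_of_gt hfacpos), one_div]
  -- final numeric comparison
  have hs1 : Real.sqrt m ≤ Real.sqrt 2 * Real.sqrt ((i:ℝ)+1) := by
    rw [← Real.sqrt_mul (by norm_num)]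
    apply Real.sqrt_le_sqrt
    push_cast [hm]
    linarith
  have hsq : Real.sqrt ((i:ℝ)+1) * Real.sqrt ((i:ℝ)+1) = (i:ℝ)+1 :=
    Real.mul_self_sqrt (by positivity)
  have hsqrt2 : Real.sqrt 2 ≤ 3/2 := by
    rw [show (3/2:ℝ) = Real.sqrt ((3/2)^2) from (Real.sqrt_sq (by norm_num)).symm]
    apply Real.sqrt_le_sqrt
    norm_num
  have hsqpos : 0 < Real.sqrt ((i:ℝ)+1) := Real.sqrt_pos.mpr (by positivity)
  have hsm : 0 ≤ Real.sqrt (m:ℝ) := Real.sqrt_nonneg _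
  have hfinal : (Real.exp (1/2) * Real.sqrt m) / ((m:ℝ)+1) ≤ 2 / Real.sqrt ((i:ℝ)+1) := by
    rw [div_le_div_iff₀ (by positivity) hsqpos]
    have hmc : (m:ℝ) = 2*(i:ℝ)+1 := by push_cast [hm]; ring
    have he := exp_half_le_two
    have hep := Real.exp_pos (1/2:ℝ)
    have hsqrt2' : (0:ℝ) ≤ Real.sqrt 2 := Real.sqrt_nonneg 2
    nlinarith [mul_le_mul_of_nonneg_right hs1 hsqpos.le,
      mul_le_mul_of_nonneg_right he (mul_nonneg hsm hsqpos.le),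
      mul_le_mul_of_nonneg_right hsqrt2 (le_of_lt (by positivity : (0:ℝ) < (i:ℝ)+1))]
  exact hqle2.trans hfinal



-- value of ∫ over Ioo of t^p
lemma integral_Ioo_rpow {p : ℝ} (hp : -1 < p) :
    ∫ t in Set.Ioo (0:ℝ) 1, t ^ p = 1/(p+1) := by
  have h1 : ∫ t in (0:ℝ)..1, t ^ p = 1/(p+1) := by
    rw [integral_rpow (Or.inl hp)]
    rw [Real.one_rpow, Real.zero_rpow (by linarith : p + 1 ≠ 0)]
    norm_num
  rw [← MeasureTheory.integral_Ioc_eq_integral_Ioo,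
    ← intervalIntegral.integral_of_le (by norm_num : (0:ℝ) ≤ 1)]
  exact h1

lemma intervalIntegrable_one_sub_rpow {q : ℝ} (hq : -1 < q) :
    IntervalIntegrable (fun t : ℝ => (1-t) ^ q) volume 0 1 := by
  have h := (intervalIntegral.intervalIntegrable_rpow' (a := 0) (b := 1) hq).comp_sub_left 1
  simpa using h.symm

lemma rpow_le_two_rpow_abs {t p : ℝ} (h1 : 1/2 ≤ t) (h2 : t ≤ 1) : t ^ p ≤ 2 ^ |p| := by
  rcases le_or_gt 0 p with hp | hp
  · calc t ^ p ≤ 1 := Real.rpow_le_one (by linarith) h2 hp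
    _ ≤ 2 ^ |p| := Real.one_le_rpow (by norm_num) (abs_nonneg p)
  · calc t ^ p ≤ (1/2 : ℝ) ^ p :=
        Real.rpow_le_rpow_of_nonpos (by norm_num) h1 hp.le
    _ = 2 ^ (-p) := by
        rw [one_div, Real.inv_rpow (by norm_num), ← Real.rpow_neg (by norm_num)]
    _ = 2 ^ |p| := by rw [abs_of_neg hp]

/-- integrability of `t^p (1-t)^q` on `(0,1)` for `p, q > -1`. -/
lemma intervalIntegrable_rpow_mul_one_sub {p q : ℝ} (hp : -1 < p) (hq : -1 < q) :
    IntervalIntegrable (fun t : ℝ => t ^ p * (1-t) ^ q) volume 0 1 := by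
  set C : ℝ := 2 ^ |p| + 2 ^ |q| with hC
  have hC0 : 0 < C := by positivity
  have hint : IntervalIntegrable (fun t : ℝ => C * (t ^ p + (1-t) ^ q)) volume 0 1 :=
    ((intervalIntegral.intervalIntegrable_rpow' hp).add
      (intervalIntegrable_one_sub_rpow hq)).const_mul C
  apply hint.mono_fun
  · apply Measurable.aestronglyMeasurable
    have m1 : Measurable fun t : ℝ => t ^ p := by measurability
    have m2 : Measurable fun t : ℝ => (1 - t) ^ q :=
      (by measurability : Measurable fun x : ℝ => x ^ q).comp
        (measurable_const.sub measurable_id)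
    exact m1.mul m2
  · have hmeas : MeasurableSet (Set.uIoc (0:ℝ) 1) := measurableSet_uIoc
    filter_upwards [MeasureTheory.ae_restrict_mem hmeas] with t ht
    rw [Set.uIoc_of_le (by norm_num : (0:ℝ) ≤ 1)] at ht
    obtain ⟨ht0, ht1⟩ := ht
    have h1t0 : 0 ≤ 1 - t := by linarith
    have htp : 0 ≤ t ^ p := Real.rpow_nonneg ht0.le p
    have htq : 0 ≤ (1-t) ^ q := Real.rpow_nonneg h1t0 q
    rw [Real.norm_eq_abs, Real.norm_eq_abs, abs_of_nonneg (mul_nonneg htp htq),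
      abs_of_nonneg (by positivity)]
    rcases le_or_gt t (1/2) with hhalf | hhalf
    · have hb : (1-t) ^ q ≤ 2 ^ |q| := rpow_le_two_rpow_abs (by linarith) (by linarith)
      calc t ^ p * (1-t) ^ q ≤ t ^ p * 2 ^ |q| := by
            exact mul_le_mul_of_nonneg_left hb htp
        _ ≤ C * t ^ p := by
            rw [hC, mul_comm]
            exact mul_le_mul_of_nonneg_right (le_add_of_nonneg_left (by positivity)) htp
        _ ≤ C * (t ^ p + (1-t) ^ q) := by nlinarith
    · have hb : t ^ p ≤ 2 ^ |p| := rpow_le_two_rpow_abs hhalf.le ht1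
      calc t ^ p * (1-t) ^ q ≤ 2 ^ |p| * (1-t) ^ q := mul_le_mul_of_nonneg_right hb htq
        _ ≤ C * (1-t) ^ q := by
            exact mul_le_mul_of_nonneg_right (by rw [hC]; exact le_add_of_nonneg_right (by positivity)) htq
        _ ≤ C * (t ^ p + (1-t) ^ q) := by nlinarith

/-- slope limit for `c ^ (-θ)` at `θ = 0⁺`. -/
lemma tendsto_rpow_neg_slope {c : ℝ} (hc : 0 < c) :
    Tendsto (fun θ : ℝ => (c ^ (-θ) - 1)/θ) (𝓝[>] (0:ℝ)) (𝓝 (-Real.log c)) := by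
  have hder : HasDerivAt (fun θ : ℝ => c ^ (-θ)) (-Real.log c) 0 := by
    have h1 : HasDerivAt (fun θ : ℝ => -θ * Real.log c) (-Real.log c) 0 := by
      simpa using ((hasDerivAt_id (0:ℝ)).neg.mul_const (Real.log c))
    have h2 := h1.exp
    simp only [neg_zero, zero_mul, Real.exp_zero] at h2
    have heq : (fun θ : ℝ => Real.exp (-θ * Real.log c)) = (fun θ : ℝ => c ^ (-θ)) := by
      funext θ
      rw [Real.rpow_def_of_pos hc]
      ring_nf
    rw [heq] at h2
    simpa using h2
  have := hasDerivAt_iff_tendsto_slope.mp hder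
  have h2 := this.mono_left (nhdsWithin_mono 0 (by intro y hy; exact ne_of_gt hy))
  apply h2.congr
  intro θ
  simp [slope_def_field]


lemma summable_inv_sq_shift : Summable (fun k : ℕ => 1/(((k:ℝ)+1)^2)) := by
  have h : Summable (fun n : ℕ => 1/((n:ℝ)^2)) := by
    simpa using Real.summable_one_div_nat_pow.mpr (by norm_num : 1 < 2)
  have := (summable_nat_add_iff 1).mpr h
  simpa [Nat.cast_add] using this

lemma cot_expansion {x : ℝ} (hx0 : 0 < x) (hx1 : x < 1) :
    HasSum (fun k : ℕ => 2*x/(x^2 - ((k:ℝ)+1)^2)) (π * Real.cot (π*x) - 1/x) := by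
  set b : ℝ := (1+x)/2 with hb
  have hxb : x < b := by simp only [hb]; linarith
  have hb0 : 0 < b := by simp only [hb]; linarith
  have hb1 : b < 1 := by simp only [hb]; linarith
  set s : Set ℝ := Set.Ioo 0 b with hs
  have hxs : x ∈ s := ⟨hx0, hxb⟩
  -- terms
  set d : ℕ → ℝ → ℝ := fun k y => 2*y/(y^2 - ((k:ℝ)+1)^2) with hd
  set trm : ℕ → ℝ → ℝ := fun k y => Real.log (1 - y^2/(((k:ℝ)+1)^2)) with htrm
  set u : ℕ → ℝ := fun k => 2/((((k:ℝ)+1)^2 - b^2)) with hu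
  have hcpos : ∀ k : ℕ, (0:ℝ) < ((k:ℝ)+1)^2 - b^2 := by
    intro k
    have h1 : b^2 < 1 := by nlinarith
    have h2 : (1:ℝ) ≤ ((k:ℝ)+1)^2 := by nlinarith [Nat.cast_nonneg (α := ℝ) k]
    linarith
  have hupos : ∀ k, 0 ≤ u k := fun k => le_of_lt (div_pos two_pos (hcpos k))
  have husum : Summable u := by
    have h1b : (0:ℝ) < 1 - b^2 := by nlinarith
    refine Summable.of_nonneg_of_le hupos ?_
      (summable_inv_sq_shift.mul_left (2/(1-b^2)))
    intro k
    have hk1 : (1:ℝ) ≤ ((k:ℝ)+1)^2 := by nlinarith [Nat.cast_nonneg (α := ℝ) k]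
    have key : ((k:ℝ)+1)^2 * (1 - b^2) ≤ ((k:ℝ)+1)^2 - b^2 := by nlinarith
    have h2 : (2:ℝ)/(1-b^2) * (1/(((k:ℝ)+1)^2)) = 2/(((k:ℝ)+1)^2 * (1-b^2)) := by
      field_simp
    rw [h2]
    exact div_le_div_of_nonneg_left (by norm_num) (by positivity) key
  -- positivity of factors on s (indeed on Ioo (-1) 1 ∩ ...)
  have hfac : ∀ (k : ℕ) (y : ℝ), y ∈ s → 0 < 1 - y^2/(((k:ℝ)+1)^2) := by
    intro k y hy
    obtain ⟨hy0, hyb⟩ := hy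
    have hy1 : y < 1 := lt_trans hyb hb1
    have hk1 : (1:ℝ) ≤ ((k:ℝ)+1)^2 := by nlinarith [Nat.cast_nonneg (α := ℝ) k]
    have : y^2 < 1 := by nlinarith
    have : y^2/(((k:ℝ)+1)^2) < 1 := by
      rw [div_lt_one (by positivity)]; nlinarith
    linarith
  -- derivative of each term
  have hderiv : ∀ (k : ℕ) (y : ℝ), y ∈ s → HasDerivAt (trm k) (d k y) y := by
    intro k y hy
    have hc : (0:ℝ) < ((k:ℝ)+1)^2 := by positivity
    have h1 : HasDerivAt (fun z : ℝ => 1 - z^2/(((k:ℝ)+1)^2)) (-(2*y/(((k:ℝ)+1)^2))) y := by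
      have := ((hasDerivAt_pow 2 y).div_const (((k:ℝ)+1)^2)).const_sub 1
      simpa [pow_one] using this
    have hne : 1 - y^2/(((k:ℝ)+1)^2) ≠ 0 := ne_of_gt (hfac k y hy)
    have h2 := h1.log hne
    have hyc : y^2 - ((k:ℝ)+1)^2 ≠ 0 := by
      have h5 := hfac k y hy
      have h6 : y^2 / (((k:ℝ)+1)^2) < 1 := by linarith
      rw [div_lt_one hc] at h6
      nlinarith
    have heq : (-(2*y/(((k:ℝ)+1)^2)))/(1 - y^2/(((k:ℝ)+1)^2)) = d k y := by
      rw [hd]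
      rw [div_eq_div_iff hne hyc]
      field_simp
      ring
    rw [← heq]
    exact h2
  -- pointwise convergence to g
  set g : ℝ → ℝ := fun y => Real.log (Real.sin (π*y)) - Real.log (π*y) with hg
  have hfg : ∀ y ∈ s, Tendsto (fun n => ∑ k ∈ Finset.range n, trm k y) atTop (𝓝 (g y)) := by
    intro y hy
    obtain ⟨hy0, hyb⟩ := hy
    have hy1 : y < 1 := lt_trans hyb hb1
    have hπy : (0:ℝ) < π * y := by positivity
    have hsin : 0 < Real.sin (π*y) := Real.sin_pos_of_pos_of_lt_pi (by positivity)
      (by nlinarith [Real.pi_pos])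
    have hP := Real.tendsto_euler_sin_prod y
    have hP2 : Tendsto (fun n : ℕ => ∏ j ∈ Finset.range n, ((1:ℝ) - y^2/((j:ℝ)+1)^2))
        atTop (𝓝 (Real.sin (π*y)/(π*y))) := by
      have := hP.const_mul (π*y)⁻¹
      simp only [← mul_assoc, inv_mul_cancel₀ (ne_of_gt hπy), one_mul] at this
      rw [div_eq_inv_mul]
      exact this
    have hlim_ne : Real.sin (π*y)/(π*y) ≠ 0 := ne_of_gt (div_pos hsin hπy)
    have hP3 := hP2.log hlim_ne
    have heq : ∀ n : ℕ, Real.log (∏ j ∈ Finset.range n, ((1:ℝ) - y^2/((j:ℝ)+1)^2))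
        = ∑ k ∈ Finset.range n, trm k y := by
      intro n
      rw [Real.log_prod]
      intro j _
      exact ne_of_gt (hfac j y ⟨hy0, hyb⟩)
    rw [Real.log_div (ne_of_gt hsin) (ne_of_gt hπy)] at hP3
    exact Tendsto.congr heq hP3
  -- uniform convergence of derivative partial sums
  have hbound : ∀ (k : ℕ) (y : ℝ), y ∈ s → ‖d k y‖ ≤ u k := by
    intro k y hy
    obtain ⟨hy0, hyb⟩ := hy
    have hy1 : y < 1 := lt_trans hyb hb1
    have hden : 0 < ((k:ℝ)+1)^2 - y^2 := by
      have := hcpos k; nlinarith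
    have hne2 : y^2 - ((k:ℝ)+1)^2 ≠ 0 := ne_of_lt (by nlinarith)
    have hne3 : ((k:ℝ)+1)^2 - y^2 ≠ 0 := ne_of_gt hden
    have hrepr : d k y = -(2*y/((((k:ℝ)+1)^2 - y^2))) := by
      rw [hd, ← neg_div, div_eq_div_iff hne2 hne3]
      ring
    rw [hrepr, norm_neg, Real.norm_eq_abs, abs_of_nonneg (by positivity)]
    rw [hu, div_le_div_iff₀ hden (hcpos k)]
    have hy2b2 : y^2 ≤ b^2 := by nlinarith
    have step1 : 2*y*(((k:ℝ)+1)^2 - b^2) ≤ 2*(((k:ℝ)+1)^2 - b^2) := by nlinarith [hcpos k]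
    have step2 : 2*(((k:ℝ)+1)^2 - b^2) ≤ 2*(((k:ℝ)+1)^2 - y^2) := by nlinarith
    linarith
  have huc : TendstoUniformlyOn (fun n (y:ℝ) => ∑ k ∈ Finset.range n, d k y)
      (fun y => ∑' k, d k y) atTop s := tendstoUniformlyOn_tsum_nat husum hbound
  -- apply uniform limit derivative theorem
  have hmain : HasDerivAt g (∑' k, d k x) x := by
    apply hasDerivAt_of_tendstoUniformlyOn isOpen_Ioo huc
    · filter_upwards with n y hy
      exact HasDerivAt.sum (fun k _ => hderiv k y hy)
    · exact fun y hy => by simpa only [Finset.sum_apply] using hfg y hy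
    · exact hxs
  -- direct derivative computation
  have hsinx : 0 < Real.sin (π*x) := Real.sin_pos_of_pos_of_lt_pi (by positivity)
      (by nlinarith [Real.pi_pos])
  have hdirect : HasDerivAt g (π * Real.cot (π*x) - 1/x) x := by
    have hπ : HasDerivAt (fun y : ℝ => π * y) π x := by
      simpa using (hasDerivAt_id x).const_mul π
    have h1 : HasDerivAt (fun y : ℝ => Real.sin (π*y)) (Real.cos (π*x) * π) x :=
      (Real.hasDerivAt_sin (π*x)).comp x hπ
    have h2 := h1.log (ne_of_gt hsinx)
    have h3 : HasDerivAt (fun y : ℝ => Real.log (π*y)) (π/(π*x)) x :=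
      hπ.log (by positivity)
    have h4 := h2.sub h3
    refine h4.congr_deriv ?_
    rw [Real.cot_eq_cos_div_sin]
    field_simp
  have hval : ∑' k, d k x = π * Real.cot (π*x) - 1/x := hmain.unique hdirect
  have hsumm : Summable (fun k => d k x) :=
    husum.of_norm_bounded (fun k => hbound k x hxs)
  rw [← hval]
  exact hsumm.hasSum

/-! ## Part 4: Tannery limit for the series -/

lemma summable_sqrt_shift : Summable (fun n : ℕ => 1/(Real.sqrt ((n:ℝ)+1) * ((n:ℝ)+1))) := by
  have h : Summable (fun n : ℕ => (((n:ℝ)) ^ ((3:ℝ)/2))⁻¹) :=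
    Real.summable_nat_rpow_inv.mpr (by norm_num)
  have h2 := (summable_nat_add_iff 1).mpr h
  apply h2.congr
  intro n
  have hpos : (0:ℝ) < (n:ℝ)+1 := by positivity
  have : (((n:ℝ)+1) ^ ((3:ℝ)/2)) = Real.sqrt ((n:ℝ)+1) * ((n:ℝ)+1) := by
    rw [show ((3:ℝ)/2) = 1/2 + 1 by norm_num, Real.rpow_add hpos, Real.rpow_one,
      ← Real.sqrt_eq_rpow]
  push_cast
  rw [this]
  rw [one_div]

lemma tendsto_A {α : ℝ} (hα0 : 0 < α) (hα2 : α < 2) :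
    Tendsto (fun θ : ℝ => ∑' i : ℕ, qfun i θ * (2/(2*((i:ℝ)+1) - α)))
      (𝓝[>] (0:ℝ))
      (𝓝 (∑' i : ℕ, (1/(2*(i:ℝ)+2)) * (2/(2*((i:ℝ)+1) - α)))) := by
  have hcast : ∀ i : ℕ, (0:ℝ) ≤ (i:ℝ) := fun i => Nat.cast_nonneg i
  have hden : ∀ i : ℕ, (0:ℝ) < 2*((i:ℝ)+1) - α := by
    intro i
    have := hcast i
    nlinarith
  have hden2 : ∀ i : ℕ, (0:ℝ) < (2-α)*((i:ℝ)+1) := by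
    intro i
    have := hcast i
    nlinarith
  apply tendsto_tsum_of_dominated_convergence
    (bound := fun i : ℕ => (2/Real.sqrt ((i:ℝ)+1)) * (2/((2-α)*((i:ℝ)+1))))
  · -- summable bound
    apply (summable_sqrt_shift.mul_left (4/(2-α))).congr
    intro i
    have h1 : Real.sqrt ((i:ℝ)+1) ≠ 0 := ne_of_gt (Real.sqrt_pos.mpr (by positivity))
    have h2 : ((i:ℝ)+1) ≠ 0 := by positivity
    have h3 : (2-α) ≠ 0 := by linarith
    field_simp
    ring
  · -- pointwise convergence
    intro i
    have hc := ((qfun_continuous i).tendsto 0).mono_left (nhdsWithin_le_nhds (s := Set.Ioi (0:ℝ)))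
    have := hc.mul_const (2/(2*((i:ℝ)+1) - α))
    rw [qfun_zero i] at this
    exact this
  · -- bound
    filter_upwards [Ioo_mem_nhdsGT_of_mem (Set.mem_Ico.mpr ⟨le_refl (0:ℝ), by norm_num⟩ :
      (0:ℝ) ∈ Set.Ico (0:ℝ) (1/2))] with θ hθ
    obtain ⟨hθ0, hθh⟩ := hθ
    intro i
    have hq := qfun_bound i hθ0 hθh.le
    have hqpos : 0 ≤ qfun i θ := by
      rw [qfun]
      apply div_nonneg _ (by positivity)
      apply Finset.prod_nonneg
      intro j _
      have : (0:ℝ) ≤ (j:ℝ) := Nat.cast_nonneg j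
      linarith
    have hcle : 2/(2*((i:ℝ)+1) - α) ≤ 2/((2-α)*((i:ℝ)+1)) := by
      apply div_le_div_of_nonneg_left (by norm_num) (hden2 i)
      have : (0:ℝ) ≤ (i:ℝ) := Nat.cast_nonneg i
      nlinarith
    have hcpos : 0 ≤ 2/(2*((i:ℝ)+1) - α) := le_of_lt (div_pos two_pos (hden i))
    rw [Real.norm_eq_abs, abs_of_nonneg (mul_nonneg hqpos hcpos)]
    exact mul_le_mul hq hcle hcpos (by positivity)

/-! ## Part 5: dominated convergence for the integral term -/

lemma integrableOn_bound {α : ℝ} (hα0 : 0 < α) :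
    IntegrableOn (fun t : ℝ => t^(α-1) * (1 + 4*(1-t)^(-(3/4:ℝ)))) (Set.Ioo 0 1) volume := by
  have h1 : IntervalIntegrable (fun t : ℝ => t^(α-1)) volume 0 1 :=
    intervalIntegral.intervalIntegrable_rpow' (by linarith)
  have h2 : IntervalIntegrable (fun t : ℝ => t^(α-1) * (1-t)^(-(3/4:ℝ))) volume 0 1 :=
    intervalIntegrable_rpow_mul_one_sub (by linarith) (by norm_num)
  have h3 : IntervalIntegrable (fun t : ℝ => t^(α-1) + 4*(t^(α-1) * (1-t)^(-(3/4:ℝ)))) volume 0 1 :=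
    h1.add (h2.const_mul 4)
  have h4 : IntegrableOn (fun t : ℝ => t^(α-1) + 4*(t^(α-1) * (1-t)^(-(3/4:ℝ))))
      (Set.Ioo 0 1) volume :=
    ((intervalIntegrable_iff_integrableOn_Ioc_of_le (by norm_num)).mp h3).mono_set
      Set.Ioo_subset_Ioc_self
  apply h4.congr_fun _ measurableSet_Ioo
  intro t _
  ring

lemma tendsto_B {α : ℝ} (hα0 : 0 < α) (hα2 : α < 2) :
    Tendsto (fun θ : ℝ => ∫ t in Set.Ioo (0:ℝ) 1,
        t^(α+θ-1) * (((1+t)^(-θ) + (1-t)^(-θ) - 2)/θ))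
      (𝓝[>] (0:ℝ))
      (𝓝 (∫ t in Set.Ioo (0:ℝ) 1, t^(α-1) * (-(Real.log (1+t) + Real.log (1-t))))) := by
  apply MeasureTheory.tendsto_integral_filter_of_dominated_convergence
    (bound := fun t : ℝ => t^(α-1) * (1 + 4*(1-t)^(-(3/4:ℝ))))
  · -- measurability
    filter_upwards with θ
    apply Measurable.aestronglyMeasurable
    have m1 : Measurable fun t : ℝ => t ^ (α+θ-1) := by measurability
    have m2 : Measurable fun t : ℝ => (1+t) ^ (-θ) :=
      (by measurability : Measurable fun x : ℝ => x ^ (-θ)).comp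
        (measurable_const.add measurable_id)
    have m3 : Measurable fun t : ℝ => (1-t) ^ (-θ) :=
      (by measurability : Measurable fun x : ℝ => x ^ (-θ)).comp
        (measurable_const.sub measurable_id)
    exact m1.mul (((m2.add m3).sub measurable_const).div_const θ)
  · -- bound
    filter_upwards [Ioo_mem_nhdsGT_of_mem (Set.mem_Ico.mpr ⟨le_refl (0:ℝ), by norm_num⟩ :
      (0:ℝ) ∈ Set.Ico (0:ℝ) (1/2))] with θ hθ
    obtain ⟨hθ0, hθh⟩ := hθ
    filter_upwards [MeasureTheory.ae_restrict_mem measurableSet_Ioo] with t ht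
    obtain ⟨ht0, ht1⟩ := ht
    have h1t : (0:ℝ) < 1 - t := by linarith
    have h1t' : (1:ℝ) ≤ 1 + t := by linarith
    have h1tp : (0:ℝ) < 1 + t := by linarith
    set a1 : ℝ := (1+t)^(-θ) with ha1
    set a2 : ℝ := (1-t)^(-θ) with ha2
    -- bounds on a1
    have ha1le : a1 ≤ 1 := Real.rpow_le_one_of_one_le_of_nonpos h1t' (by linarith)
    have ha1lb : 1 - θ * Real.log (1+t) ≤ a1 := by
      rw [ha1, Real.rpow_def_of_pos h1tp]
      have := Real.add_one_le_exp (Real.log (1+t) * (-θ))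
      nlinarith [this]
    have hlog1t : Real.log (1+t) ≤ t := by
      have := Real.log_le_sub_one_of_pos h1tp
      linarith
    have hlog1t0 : 0 ≤ Real.log (1+t) := Real.log_nonneg h1t'
    -- bounds on a2
    have ha2ge : 1 ≤ a2 := by
      rw [ha2]
      have := Real.rpow_le_rpow_of_exponent_ge h1t (by linarith : 1 - t ≤ 1)
        (by linarith : -θ ≤ 0)
      simpa using this
    have hv0 : 0 ≤ -Real.log (1-t) := by
      have : Real.log (1-t) ≤ 0 := Real.log_nonpos (by linarith) (by linarith)
      linarith
    have ha2ub : a2 - 1 ≤ θ * (-Real.log (1-t)) * a2 := by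
      rw [ha2, Real.rpow_def_of_pos h1t]
      set v : ℝ := Real.log (1-t) * (-θ) with hv
      have hvnn : 0 ≤ v := by
        rw [hv]; nlinarith
      have h5 := Real.add_one_le_exp (-v)
      have h6 : (1 - v) * Real.exp v ≤ 1 := by
        have h7 : Real.exp (-v) * Real.exp v = 1 := by
          rw [← Real.exp_add]; simp
        nlinarith [Real.exp_pos v, h5]
      have h8 : Real.exp v - 1 ≤ v * Real.exp v := by nlinarith [Real.exp_pos v]
      have : θ * (-Real.log (1-t)) = v := by rw [hv]; ring
      rw [this]
      exact h8
    have ha2sq : a2 ≤ (1-t)^(-(1/2:ℝ)) := by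
      rw [ha2]
      exact Real.rpow_le_rpow_of_exponent_ge h1t (by linarith) (by linarith)
    have hlogb : -Real.log (1-t) ≤ 4 * (1-t)^(-(1/4:ℝ)) := by
      have hp : (0:ℝ) < (1-t)^(-(1/4:ℝ)) := Real.rpow_pos_of_pos h1t _
      have h9 := Real.log_le_sub_one_of_pos hp
      have h10 : Real.log ((1-t)^(-(1/4:ℝ))) = (-(1/4:ℝ)) * Real.log (1-t) :=
        Real.log_rpow h1t _
      nlinarith
    have ha2f : (a2 - 1)/θ ≤ 4 * (1-t)^(-(3/4:ℝ)) := by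
      rw [div_le_iff₀ hθ0]
      have hc1 : (0:ℝ) ≤ (1-t)^(-(1/4:ℝ)) := le_of_lt (Real.rpow_pos_of_pos h1t _)
      have hc2 : (0:ℝ) ≤ (1-t)^(-(1/2:ℝ)) := le_of_lt (Real.rpow_pos_of_pos h1t _)
      have ha2nn : 0 ≤ a2 := by linarith
      have key : θ * (-Real.log (1-t)) * a2 ≤ θ * (4 * (1-t)^(-(1/4:ℝ))) * (1-t)^(-(1/2:ℝ)) := by
        apply mul_le_mul
        · exact mul_le_mul_of_nonneg_left hlogb hθ0.le
        · exact ha2sq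
        · linarith
        · positivity
      have hcomb : (1-t)^(-(1/4:ℝ)) * (1-t)^(-(1/2:ℝ)) = (1-t)^(-(3/4:ℝ)) := by
        rw [← Real.rpow_add h1t]
        norm_num
      calc a2 - 1 ≤ θ * (-Real.log (1-t)) * a2 := ha2ub
        _ ≤ θ * (4 * (1-t)^(-(1/4:ℝ))) * (1-t)^(-(1/2:ℝ)) := key
        _ = 4 * (1-t)^(-(3/4:ℝ)) * θ := by
            rw [← hcomb]; ring
    -- final assembly of the bound
    have hnum : |a1 + a2 - 2| ≤ θ * (1 + 4 * (1-t)^(-(3/4:ℝ))) := by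
      have h11 : |a1 + a2 - 2| ≤ |a1 - 1| + |a2 - 1| := by
        have : a1 + a2 - 2 = (a1 - 1) + (a2 - 1) := by ring
        rw [this]
        exact abs_add_le _ _
      have h12 : |a1 - 1| ≤ θ := by
        rw [abs_sub_comm, abs_of_nonneg (by linarith)]
        nlinarith
      have h13 : |a2 - 1| ≤ θ * (4 * (1-t)^(-(3/4:ℝ))) := by
        rw [abs_of_nonneg (by linarith)]
        have := ha2f
        rw [div_le_iff₀ hθ0] at this
        linarith [this]
      calc |a1 + a2 - 2| ≤ |a1 - 1| + |a2 - 1| := h11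
        _ ≤ θ + θ * (4 * (1-t)^(-(3/4:ℝ))) := add_le_add h12 h13
        _ = θ * (1 + 4 * (1-t)^(-(3/4:ℝ))) := by ring
    have htp : t^(α+θ-1) ≤ t^(α-1) :=
      Real.rpow_le_rpow_of_exponent_ge ht0 ht1.le (by linarith)
    have htpnn : (0:ℝ) ≤ t^(α+θ-1) := Real.rpow_nonneg ht0.le _
    rw [Real.norm_eq_abs, abs_mul, abs_of_nonneg htpnn, abs_div, abs_of_pos hθ0]
    have hfrac : |a1 + a2 - 2|/θ ≤ 1 + 4 * (1-t)^(-(3/4:ℝ)) := by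
      rw [div_le_iff₀ hθ0]
      linarith [hnum]
    calc t^(α+θ-1) * (|a1 + a2 - 2|/θ) ≤ t^(α-1) * (1 + 4 * (1-t)^(-(3/4:ℝ))) := by
          apply mul_le_mul htp hfrac (by positivity) (Real.rpow_nonneg ht0.le _)
      _ = t^(α-1) * (1 + 4*(1-t)^(-(3/4:ℝ))) := by ring
  · exact integrableOn_bound hα0
  · -- pointwise limit
    filter_upwards [MeasureTheory.ae_restrict_mem measurableSet_Ioo] with t ht
    obtain ⟨ht0, ht1⟩ := ht
    have h1t : (0:ℝ) < 1 - t := by linarith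
    have h1tp : (0:ℝ) < 1 + t := by linarith
    have T1 : Tendsto (fun θ : ℝ => t^(α+θ-1)) (𝓝[>] (0:ℝ)) (𝓝 (t^(α-1))) := by
      have hc : Continuous (fun θ : ℝ => Real.exp (Real.log t * (α+θ-1))) := by
        continuity
      have h := (hc.tendsto 0).mono_left (nhdsWithin_le_nhds (s := Set.Ioi (0:ℝ)))
      have heq : ∀ θ : ℝ, Real.exp (Real.log t * (α+θ-1)) = t^(α+θ-1) := fun θ =>
        (Real.rpow_def_of_pos ht0 _).symm
      simp only [heq] at h
      simpa using h
    have T2 := tendsto_rpow_neg_slope h1tp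
    have T3 := tendsto_rpow_neg_slope h1t
    have Tcomb := T1.mul (T2.add T3)
    have hval : -Real.log (1+t) + -Real.log (1-t) = -(Real.log (1+t) + Real.log (1-t)) := by ring
    rw [hval] at Tcomb
    apply Tcomb.congr'
    filter_upwards [self_mem_nhdsWithin] with θ hθ
    have hθ0 : θ ≠ 0 := ne_of_gt hθ
    congr 1
    field_simp
    ring

/-! ## Part 6: the limit integral as a series -/

lemma summable_s2 {α : ℝ} (hα0 : 0 < α) :
    Summable (fun k : ℕ => 1/((((k:ℝ)+1))*(2*((k:ℝ)+1)+α))) := by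
  refine Summable.of_nonneg_of_le ?_ ?_ summable_inv_sq_shift
  · intro k
    have h1 : (0:ℝ) < (k:ℝ)+1 := by positivity
    have h2 : (0:ℝ) < 2*((k:ℝ)+1)+α := by nlinarith
    positivity
  · intro k
    have h1 : (0:ℝ) < (k:ℝ)+1 := by positivity
    apply div_le_div_of_nonneg_left (by norm_num) (by positivity)
    nlinarith

lemma integral_log_series {α : ℝ} (hα0 : 0 < α) (hα2 : α < 2) :
    ∫ t in Set.Ioo (0:ℝ) 1, t^(α-1) * (-(Real.log (1+t) + Real.log (1-t))) =
      ∑' k : ℕ, 1/((((k:ℝ)+1))*(2*((k:ℝ)+1)+α)) := by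
  set F : ℕ → ℝ → ℝ := fun k t => t^(α-1) * ((t^2)^(k+1)/((k:ℝ)+1)) with hF
  have hexp : ∀ k : ℕ, (-1:ℝ) < α+2*(k:ℝ)+1 := by
    intro k
    have := (Nat.cast_nonneg k : (0:ℝ) ≤ (k:ℝ))
    linarith
  have hrpow_int : ∀ k : ℕ, IntegrableOn (fun t : ℝ => t^(α+2*(k:ℝ)+1)) (Set.Ioo 0 1) volume := by
    intro k
    have h := intervalIntegral.intervalIntegrable_rpow' (a := 0) (b := 1)
      (r := α+2*(k:ℝ)+1) (hexp k)
    exact ((intervalIntegrable_iff_integrableOn_Ioc_of_le (by norm_num)).mp h).mono_set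
      Set.Ioo_subset_Ioc_self
  have hFeq : ∀ k : ℕ, Set.EqOn (F k) (fun t => (1/((k:ℝ)+1)) * t^(α+2*(k:ℝ)+1))
      (Set.Ioo (0:ℝ) 1) := by
    intro k t ht
    obtain ⟨ht0, ht1⟩ := ht
    have h1 : (t^2)^(k+1) = t^(2*(k+1)) := (pow_mul t 2 (k+1)).symm
    have h2 : (t : ℝ)^(2*(k+1) : ℕ) = t^(((2*(k+1) : ℕ) : ℝ)) := (Real.rpow_natCast t _).symm
    have h3 : t^(α-1) * t^(((2*(k+1) : ℕ) : ℝ)) = t^(α-1+((2*(k+1) : ℕ) : ℝ)) :=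
      (Real.rpow_add ht0 _ _).symm
    have h4 : α-1+((2*(k+1) : ℕ) : ℝ) = α+2*(k:ℝ)+1 := by push_cast; ring
    show t^(α-1) * ((t^2)^(k+1)/((k:ℝ)+1)) = (1/((k:ℝ)+1)) * t^(α+2*(k:ℝ)+1)
    rw [h1, h2]
    rw [show t^(α-1) * (t^(((2*(k+1) : ℕ) : ℝ))/((k:ℝ)+1))
        = (1/((k:ℝ)+1)) * (t^(α-1) * t^(((2*(k+1) : ℕ) : ℝ))) from by ring]
    rw [h3, h4]
  have hFint : ∀ k : ℕ, IntegrableOn (F k) (Set.Ioo (0:ℝ) 1) volume := by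
    intro k
    exact MeasureTheory.IntegrableOn.congr_fun
      (Integrable.const_mul (hrpow_int k) (1/((k:ℝ)+1))) (hFeq k).symm measurableSet_Ioo
  have hFval : ∀ k : ℕ, ∫ t in Set.Ioo (0:ℝ) 1, F k t
      = 1/((((k:ℝ)+1))*(2*((k:ℝ)+1)+α)) := by
    intro k
    rw [MeasureTheory.setIntegral_congr_fun measurableSet_Ioo (hFeq k)]
    rw [MeasureTheory.integral_const_mul, integral_Ioo_rpow (hexp k)]
    rw [div_mul_div_comm]
    congr 1
    · norm_num
    · ring
  have hFnorm : ∀ k : ℕ, ∫ t in Set.Ioo (0:ℝ) 1, ‖F k t‖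
      = 1/((((k:ℝ)+1))*(2*((k:ℝ)+1)+α)) := by
    intro k
    rw [← hFval k]
    apply MeasureTheory.setIntegral_congr_fun measurableSet_Ioo
    intro t ht
    obtain ⟨ht0, ht1⟩ := ht
    have hnn : 0 ≤ F k t := by
      rw [hF]
      have h5 : (0:ℝ) ≤ t^(α-1) := Real.rpow_nonneg ht0.le _
      have h6 : (0:ℝ) ≤ (t^2)^(k+1) := by positivity
      have h7 : (0:ℝ) < (k:ℝ)+1 := by positivity
      positivity
    simp [Real.norm_eq_abs, abs_of_nonneg hnn]
  have hptw : Set.EqOn (fun t : ℝ => t^(α-1) * (-(Real.log (1+t) + Real.log (1-t))))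
      (fun t : ℝ => ∑' k : ℕ, F k t) (Set.Ioo (0:ℝ) 1) := by
    intro t ht
    obtain ⟨ht0, ht1⟩ := ht
    have habs : |t^2| < 1 := by
      rw [abs_of_nonneg (sq_nonneg t)]
      nlinarith
    have hs := hasSum_pow_div_log_of_abs_lt_one habs
    have hs2 := hs.mul_left (t^(α-1))
    have hlog : Real.log (1 - t^2) = Real.log (1+t) + Real.log (1-t) := by
      rw [← Real.log_mul (by nlinarith) (by nlinarith)]
      congr 1
      ring
    have := hs2.tsum_eq
    show t^(α-1) * (-(Real.log (1+t) + Real.log (1-t))) = ∑' k : ℕ, F k t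
    rw [this, hlog]
  have hsumnorm : Summable (fun k : ℕ => ∫ t in Set.Ioo (0:ℝ) 1, ‖F k t‖) :=
    (summable_s2 hα0).congr (fun k => (hFnorm k).symm)
  have hswap := MeasureTheory.integral_tsum_of_summable_integral_norm
    (μ := volume.restrict (Set.Ioo (0:ℝ) 1)) (F := F) hFint hsumnorm
  rw [MeasureTheory.setIntegral_congr_fun measurableSet_Ioo hptw, ← hswap]
  exact tsum_congr hFval

/-! ## Part 7: final value identity -/

lemma summable_s1 {α : ℝ} (hα0 : 0 < α) (hα2 : α < 2) :
    Summable (fun i : ℕ => (1/(2*(i:ℝ)+2)) * (2/(2*((i:ℝ)+1) - α))) := by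
  have hcast : ∀ i : ℕ, (0:ℝ) ≤ (i:ℝ) := fun i => Nat.cast_nonneg i
  refine Summable.of_nonneg_of_le ?_ ?_ (summable_inv_sq_shift.mul_left (2/(2-α)))
  · intro i
    have h1 : (0:ℝ) < (i:ℝ)+1 := by positivity
    have h2 : (0:ℝ) < 2*((i:ℝ)+1)-α := by nlinarith [hcast i]
    positivity
  · intro i
    have h1 : (0:ℝ) < (i:ℝ)+1 := by positivity
    have h2 : (0:ℝ) < 2*((i:ℝ)+1)-α := by nlinarith [hcast i]
    have h3 : (0:ℝ) < (2-α)*((i:ℝ)+1) := by nlinarith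
    have e1 : (1:ℝ)/(2*(i:ℝ)+2) ≤ 1/((i:ℝ)+1) := by
      apply div_le_div_of_nonneg_left (by norm_num) h1
      linarith
    have e2 : (2:ℝ)/(2*((i:ℝ)+1) - α) ≤ 2/((2-α)*((i:ℝ)+1)) := by
      apply div_le_div_of_nonneg_left (by norm_num) h3
      nlinarith [hcast i]
    calc (1/(2*(i:ℝ)+2)) * (2/(2*((i:ℝ)+1) - α))
        ≤ (1/((i:ℝ)+1)) * (2/((2-α)*((i:ℝ)+1))) := by
          apply mul_le_mul e1 e2 (by positivity) (by positivity)
      _ = 2/(2-α) * (1/(((i:ℝ)+1)^2)) := by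
          have h4 : (2-α) ≠ 0 := ne_of_gt (by linarith)
          have h5 : ((i:ℝ)+1) ≠ 0 := ne_of_gt h1
          field_simp
  
lemma final_value {α : ℝ} (hα0 : 0 < α) (hα2 : α < 2) :
    2/α - α*(∑' i : ℕ, (1/(2*(i:ℝ)+2)) * (2/(2*((i:ℝ)+1) - α)))
        - α*(∑' k : ℕ, 1/((((k:ℝ)+1))*(2*((k:ℝ)+1)+α))) = π * Real.cot (π * α / 2) := by
  have hx0 : 0 < α/2 := by linarith
  have hx1 : α/2 < 1 := by linarith
  have hcot := cot_expansion hx0 hx1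
  have hS1 := summable_s1 hα0 hα2
  have hS2 := summable_s2 (α := α) hα0
  have hcast : ∀ i : ℕ, (0:ℝ) ≤ (i:ℝ) := fun i => Nat.cast_nonneg i
  have key : ∀ k : ℕ,
      α * ((1/(2*(k:ℝ)+2)) * (2/(2*((k:ℝ)+1) - α))) + α * (1/((((k:ℝ)+1))*(2*((k:ℝ)+1)+α)))
        = -(2*(α/2)/((α/2)^2 - ((k:ℝ)+1)^2)) := by
    intro k
    have h1 : (0:ℝ) < (k:ℝ)+1 := by positivity
    have h2 : (0:ℝ) < 2*((k:ℝ)+1)-α := by nlinarith [hcast k]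
    have h3 : (0:ℝ) < 2*((k:ℝ)+1)+α := by nlinarith [hcast k]
    have h4 : (α/2)^2 - ((k:ℝ)+1)^2 ≠ 0 := by nlinarith [hcast k]
    have h5 : (2:ℝ)*(k:ℝ)+2 ≠ 0 := by positivity
    have h6 : ((k:ℝ)+1) ≠ 0 := ne_of_gt h1
    have h7 : (2*((k:ℝ)+1)-α) ≠ 0 := ne_of_gt h2
    have h8 : (2*((k:ℝ)+1)+α) ≠ 0 := ne_of_gt h3
    have hD : ((α/2)^2-((k:ℝ)+1)^2) = -((2*((k:ℝ)+1)-α)*(2*((k:ℝ)+1)+α))/4 := by ring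
    rw [hD]
    field_simp
    ring
  have hsum_eq : α*(∑' i : ℕ, (1/(2*(i:ℝ)+2)) * (2/(2*((i:ℝ)+1) - α)))
      + α*(∑' k : ℕ, 1/((((k:ℝ)+1))*(2*((k:ℝ)+1)+α)))
      = -(π * Real.cot (π*(α/2)) - 1/(α/2)) := by
    rw [← tsum_mul_left, ← tsum_mul_left, ← Summable.tsum_add (hS1.mul_left α) (hS2.mul_left α)]
    rw [tsum_congr key, tsum_neg, hcot.tsum_eq]
  have h2α : 1/(α/2) = 2/α := by
    field_simp
  have hμ : π * (α/2) = π * α / 2 := by ring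
  rw [hμ, h2α] at hsum_eq
  linarith [hsum_eq]

/-! ## Main theorem -/

/-- For every `α ∈ (0,2)`,
`lim_{θ→0+} [2/θ − (α/θ) ∑_{i=1}^∞ C(−θ,2i) 2/(2i−α)
  − (α/θ) ∫_0^1 t^{α+θ−1}((1+t)^{−θ} + (1−t)^{−θ}) dt] = π cot(πα/2)`. -/
theorem stmt_17 (α : ℝ) (hα : α ∈ Set.Ioo (0:ℝ) 2) :
    Tendsto
      (fun θ : ℝ =>
        2 / θ -
          (α / θ) *
            (∑' i : ℕ, genBinom (-θ) (2 * (i + 1)) * (2 / (2 * (i + 1) - α)))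
          - (α / θ) *
              ∫ t in (0:ℝ)..1,
                t ^ (α + θ - 1) * ((1 + t) ^ (-θ) + (1 - t) ^ (-θ)))
      (nhdsWithin 0 (Set.Ioi 0)) (nhds (π * Real.cot (π * α / 2))) := by
  obtain ⟨hα0, hα2⟩ := hα
  have hαne : α ≠ 0 := ne_of_gt hα0
  have hA := tendsto_A hα0 hα2
  have hB := tendsto_B hα0 hα2
  rw [integral_log_series hα0 hα2] at hB
  have hC : Tendsto (fun θ : ℝ => 2/(α+θ)) (𝓝[>] (0:ℝ)) (𝓝 (2/α)) := by
    have hc : Continuous (fun θ : ℝ => α + θ) := by continuity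
    have h2 := (hc.tendsto 0).mono_left (nhdsWithin_le_nhds (s := Set.Ioi (0:ℝ)))
    rw [add_zero] at h2
    exact tendsto_const_nhds.div h2 hαne
  have hcomb := (hC.sub (hA.const_mul α)).sub (hB.const_mul α)
  rw [show 2/α - α * (∑' i : ℕ, (1/(2*(i:ℝ)+2)) * (2/(2*((i:ℝ)+1) - α)))
      - α * (∑' k : ℕ, 1/((((k:ℝ)+1))*(2*((k:ℝ)+1)+α))) = π * Real.cot (π * α / 2)
    from final_value hα0 hα2] at hcomb
  apply hcomb.congr'
  filter_upwards [Ioo_mem_nhdsGT_of_mem (Set.mem_Ico.mpr ⟨le_refl (0:ℝ), by norm_num⟩ :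
      (0:ℝ) ∈ Set.Ico (0:ℝ) (1/2))] with θ hθ
  obtain ⟨hθ0, hθh⟩ := hθ
  have hθne : θ ≠ 0 := ne_of_gt hθ0
  have hαθ : (0:ℝ) < α + θ := by linarith
  set p : ℝ := α + θ - 1 with hp
  have hpgt : (-1:ℝ) < p := by rw [hp]; linarith
  -- (a) series identity
  have hser : (∑' i : ℕ, genBinom (-θ) (2 * (i + 1)) * (2 / (2 * ((i:ℝ) + 1) - α)))
      = θ * (∑' i : ℕ, qfun i θ * (2/(2*((i:ℝ)+1) - α))) := by
    rw [← tsum_mul_left]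
    apply tsum_congr
    intro i
    rw [genBinom_eq_q]
    ring
  -- (b) integral identity
  have hI1 : IntervalIntegrable (fun t : ℝ => t^p * (1+t)^(-θ)) volume 0 1 := by
    apply (intervalIntegral.intervalIntegrable_rpow' hpgt).mono_fun
    · apply Measurable.aestronglyMeasurable
      have m1 : Measurable fun t : ℝ => t ^ p := by measurability
      have m2 : Measurable fun t : ℝ => (1+t) ^ (-θ) :=
        (by measurability : Measurable fun x : ℝ => x ^ (-θ)).comp
          (measurable_const.add measurable_id)
      exact m1.mul m2
    · filter_upwards [MeasureTheory.ae_restrict_mem measurableSet_uIoc] with t ht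
      rw [Set.uIoc_of_le (by norm_num : (0:ℝ) ≤ 1)] at ht
      obtain ⟨ht0, ht1⟩ := ht
      have hb : (1+t)^(-θ) ≤ 1 :=
        Real.rpow_le_one_of_one_le_of_nonpos (by linarith) (by linarith)
      have hbnn : (0:ℝ) ≤ (1+t)^(-θ) := Real.rpow_nonneg (by linarith) _
      have htp : (0:ℝ) ≤ t^p := Real.rpow_nonneg ht0.le _
      rw [Real.norm_eq_abs, Real.norm_eq_abs, abs_of_nonneg (mul_nonneg htp hbnn),
        abs_of_nonneg htp]
      nlinarith
  have hI2 : IntervalIntegrable (fun t : ℝ => t^p * (1-t)^(-θ)) volume 0 1 :=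
    intervalIntegrable_rpow_mul_one_sub hpgt (by linarith)
  have hI3 : IntervalIntegrable (fun t : ℝ => t^p * 2) volume 0 1 :=
    (intervalIntegral.intervalIntegrable_rpow' hpgt).mul_const 2
  have hIsub : IntervalIntegrable (fun t : ℝ => t^p * ((1+t)^(-θ) + (1-t)^(-θ) - 2)) volume 0 1 := by
    have e : (fun t : ℝ => t^p * ((1+t)^(-θ) + (1-t)^(-θ) - 2))
        = fun t : ℝ => (t^p * (1+t)^(-θ) + t^p * (1-t)^(-θ)) - t^p * 2 := by
      funext t; ring
    rw [e]
    exact (hI1.add hI2).sub hI3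
  have hval1 : ∫ t in (0:ℝ)..1, t^p * 2 = 2/(α+θ) := by
    rw [intervalIntegral.integral_mul_const, integral_rpow (Or.inl hpgt)]
    rw [Real.one_rpow, Real.zero_rpow (by rw [hp]; intro h; linarith [h] : p + 1 ≠ 0)]
    rw [hp]
    ring_nf
  have hval2 : ∫ t in (0:ℝ)..1, t^p * ((1+t)^(-θ) + (1-t)^(-θ) - 2)
      = θ * ∫ t in Set.Ioo (0:ℝ) 1, t^(α+θ-1) * (((1+t)^(-θ) + (1-t)^(-θ) - 2)/θ) := by
    rw [intervalIntegral.integral_of_le (by norm_num : (0:ℝ) ≤ 1),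
      MeasureTheory.integral_Ioc_eq_integral_Ioo]
    rw [show (fun t : ℝ => t^(α+θ-1) * (((1+t)^(-θ) + (1-t)^(-θ) - 2)/θ))
        = fun t : ℝ => (1/θ) * (t^p * ((1+t)^(-θ) + (1-t)^(-θ) - 2)) from by
      funext t
      rw [hp]
      field_simp]
    rw [MeasureTheory.integral_const_mul]
    field_simp
  have hint : ∫ t in (0:ℝ)..1, t ^ (α + θ - 1) * ((1 + t) ^ (-θ) + (1 - t) ^ (-θ))
      = 2/(α+θ) + θ * ∫ t in Set.Ioo (0:ℝ) 1,
          t^(α+θ-1) * (((1+t)^(-θ) + (1-t)^(-θ) - 2)/θ) := by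
    have e2 : (fun t : ℝ => t ^ (α + θ - 1) * ((1 + t) ^ (-θ) + (1 - t) ^ (-θ)))
        = fun t : ℝ => t^p * ((1+t)^(-θ) + (1-t)^(-θ) - 2) + t^p * 2 := by
      funext t
      rw [hp]
      ring
    rw [intervalIntegral.integral_congr (fun t _ => congrFun e2 t)]
    rw [intervalIntegral.integral_add hIsub hI3, hval1, hval2]
    ring
  -- (c) combine
  rw [hser, hint]
  field_simp
  ring
end

section
/- Let θ ∈ (0,1) and let α : ℝ → ℝ satisfy 0 < α(x) for all x and sup_{x∈ℝ} α(x) < 2. Then lim_{x→∞} (1+x)^{α(x)+θ} · ∫_{−1}^1 ( (1+x)^{−θ} − (1+x+y)^{−θ} − θ·(1+x)^{−θ−1}·y ) · |y|^{−α(x)−1} dy = 0. -/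
open Filter Real MeasureTheory

lemma abs_rpow_ii {r : ℝ} (hr : -1 < r) :
    IntervalIntegrable (fun y : ℝ => |y| ^ r) volume (-1) 1 := by
  have h01 : IntervalIntegrable (fun y : ℝ => |y| ^ r) volume 0 1 := by
    refine (intervalIntegral.intervalIntegrable_rpow' hr).congr ?_
    intro y hy
    rw [Set.uIoc_of_le zero_le_one] at hy
    simp only [abs_of_pos hy.1]
  have hneg : IntervalIntegrable (fun y : ℝ => |y| ^ r) volume (-1) 0 := by
    have := (IntervalIntegrable.iff_comp_neg (f := fun y : ℝ => |y| ^ r) (a := 0) (b := 1)).mp h01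
    simp only [abs_neg, neg_zero] at this
    exact this.symm
  exact hneg.trans h01

open intervalIntegral in
lemma abs_rpow_int {r : ℝ} (hr : -1 < r) :
    ∫ y in (-1:ℝ)..1, |y| ^ r = 2 / (r + 1) := by
  have h01 : IntervalIntegrable (fun y : ℝ => |y| ^ r) volume 0 1 := by
    refine (intervalIntegrable_rpow' hr).congr ?_
    intro y hy
    rw [Set.uIoc_of_le zero_le_one] at hy
    simp only [abs_of_pos hy.1]
  have hneg : IntervalIntegrable (fun y : ℝ => |y| ^ r) volume (-1) 0 := by
    have := (IntervalIntegrable.iff_comp_neg (f := fun y : ℝ => |y| ^ r) (a := 0) (b := 1)).mp h01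
    simp only [abs_neg, neg_zero] at this
    exact this.symm
  have hval : ∫ y in (0:ℝ)..1, |y| ^ r = 1 / (r + 1) := by
    rw [intervalIntegral.integral_congr (g := fun y : ℝ => y ^ r)
      (fun y hy => by
        rw [Set.uIcc_of_le zero_le_one] at hy
        simp [abs_of_nonneg hy.1])]
    rw [integral_rpow (Or.inl hr)]
    rw [Real.one_rpow, Real.zero_rpow (by linarith)]
    ring
  have hvalneg : ∫ y in (-1:ℝ)..0, |y| ^ r = 1 / (r + 1) := by
    have := intervalIntegral.integral_comp_neg (fun y : ℝ => |y| ^ r) (a := 0) (b := 1)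
    simp only [abs_neg, neg_zero] at this
    rw [← this, hval]
  rw [← intervalIntegral.integral_add_adjacent_intervals hneg h01, hval, hvalneg]
  ring

lemma deriv_diff_bound {θ : ℝ} (hθ0 : 0 < θ) {s t : ℝ} (hs : 2 ≤ s)
    (ht : t ∈ Set.Icc (-1:ℝ) 1) :
    |θ * (s + t) ^ (-θ - 1) - θ * s ^ (-θ - 1)| ≤ θ * (θ + 1) * (s - 1) ^ (-θ - 2) * |t| := by
  have hs1 : (1:ℝ) ≤ s - 1 := by linarith
  have key := Convex.norm_image_sub_le_of_norm_hasDerivWithin_le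
    (f := fun u : ℝ => θ * u ^ (-θ - 1))
    (f' := fun u : ℝ => θ * ((-θ - 1) * u ^ (-θ - 1 - 1)))
    (s := Set.Ici (s - 1)) (C := θ * (θ + 1) * (s - 1) ^ (-θ - 2))
    (fun u hu => by
      have hu0 : u ≠ 0 := by
        have : (1:ℝ) ≤ u := le_trans hs1 hu
        linarith
      exact ((Real.hasDerivAt_rpow_const (p := -θ - 1) (Or.inl hu0)).const_mul θ).hasDerivWithinAt)
    (fun u hu => by
      have hu1 : (1:ℝ) ≤ u := le_trans hs1 hu
      have hupos : (0:ℝ) < u := by linarith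
      have hrw : u ^ (-θ - 1 - 1) = u ^ (-θ - 2) := by ring_nf
      calc ‖θ * ((-θ - 1) * u ^ (-θ - 1 - 1))‖
          = θ * (θ + 1) * u ^ (-θ - 2) := by
            rw [hrw, Real.norm_eq_abs, abs_mul, abs_mul, abs_of_pos hθ0,
              abs_of_neg (show -θ - 1 < 0 by linarith),
              abs_of_nonneg (Real.rpow_nonneg hupos.le _)]
            ring
        _ ≤ θ * (θ + 1) * (s - 1) ^ (-θ - 2) := by
            exact mul_le_mul_of_nonneg_left
              (Real.rpow_le_rpow_of_nonpos (by linarith) hu (by linarith))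
              (mul_nonneg hθ0.le (by linarith)))
    (convex_Ici _)
    (by simp only [Set.mem_Ici]; linarith : s ∈ Set.Ici (s - 1))
    (by simp only [Set.mem_Ici]; have := ht.1; linarith : s + t ∈ Set.Ici (s - 1))
  simpa [Real.norm_eq_abs, add_sub_cancel_left] using key

lemma phi_bound {θ : ℝ} (hθ0 : 0 < θ) {s y : ℝ} (hs : 2 ≤ s)
    (hy : y ∈ Set.Icc (-1:ℝ) 1) :
    |s ^ (-θ) - (s + y) ^ (-θ) - θ * s ^ (-θ - 1) * y| ≤
      θ * (θ + 1) * (s - 1) ^ (-θ - 2) * y ^ 2 := by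
  set φ : ℝ → ℝ := fun t => s ^ (-θ) - (s + t) ^ (-θ) - θ * s ^ (-θ - 1) * t with hφ
  have hsub : Set.uIcc (0:ℝ) y ⊆ Set.Icc (-1:ℝ) 1 := by
    have h1 : Set.uIcc (0:ℝ) y ⊆ Set.uIcc (-1) 1 := by
      apply Set.uIcc_subset_uIcc <;>
        simp [Set.uIcc_of_le (by norm_num : (-1:ℝ) ≤ 1), hy.1, hy.2]
    rwa [Set.uIcc_of_le (by norm_num : (-1:ℝ) ≤ 1)] at h1
  have key := Convex.norm_image_sub_le_of_norm_hasDerivWithin_le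
    (f := φ)
    (f' := fun t : ℝ => θ * (s + t) ^ (-θ - 1) - θ * s ^ (-θ - 1))
    (s := Set.uIcc 0 y) (C := θ * (θ + 1) * (s - 1) ^ (-θ - 2) * |y|)
    (fun t ht => by
      have htIcc : t ∈ Set.Icc (-1:ℝ) 1 := hsub ht
      have hst : s + t ≠ 0 := by have := htIcc.1; intro h; linarith
      have h1 : HasDerivAt (fun t : ℝ => (s + t) ^ (-θ)) (1 * (-θ) * (s + t) ^ (-θ - 1)) t := by
        have := (HasDerivAt.const_add s (hasDerivAt_id t)).rpow_const (p := -θ) (Or.inl hst)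
        simpa using this
      have h2 : HasDerivAt φ (θ * (s + t) ^ (-θ - 1) - θ * s ^ (-θ - 1)) t := by
        have h3 := ((hasDerivAt_const t (s ^ (-θ))).sub h1).sub
          ((hasDerivAt_id t).const_mul (θ * s ^ (-θ - 1)))
        exact h3.congr_deriv (by ring)
      exact h2.hasDerivWithinAt)
    (fun t ht => by
      have htIcc : t ∈ Set.Icc (-1:ℝ) 1 := hsub ht
      have hty : |t| ≤ |y| := by
        rcases Set.mem_uIcc.mp ht with h | h
        · rw [abs_of_nonneg h.1, abs_of_nonneg (le_trans h.1 h.2)]; exact h.2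
        · rw [abs_of_nonpos h.2, abs_of_nonpos (le_trans h.1 h.2)]; linarith [h.1]
      simp only [Real.norm_eq_abs]
      exact le_trans (deriv_diff_bound hθ0 hs htIcc)
        (mul_le_mul_of_nonneg_left hty
          (mul_nonneg (mul_nonneg hθ0.le (by linarith))
            (Real.rpow_nonneg (by linarith) _))))
    (convex_uIcc _ _)
    (Set.left_mem_uIcc)
    (Set.right_mem_uIcc)
  simp only [hφ, Real.norm_eq_abs, add_zero, mul_zero, sub_zero, sub_self] at key
  calc |s ^ (-θ) - (s + y) ^ (-θ) - θ * s ^ (-θ - 1) * y|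
      ≤ θ * (θ + 1) * (s - 1) ^ (-θ - 2) * |y| * |y| := key
    _ = θ * (θ + 1) * (s - 1) ^ (-θ - 2) * y ^ 2 := by
        rw [mul_assoc, ← abs_mul, ← sq, abs_of_nonneg (sq_nonneg y)]

/-- Equation (3.26): for `θ ∈ (0,1)` and `α` with `0 < α(x)`, `sup α < 2`,
`(1+x)^{α(x)+θ} ∫_{−1}^1 ((1+x)^{−θ} − (1+x+y)^{−θ} − θ(1+x)^{−θ−1}y)
|y|^{−α(x)−1} dy → 0` as `x → ∞`. -/
theorem stmt_18 (θ : ℝ) (hθ : θ ∈ Set.Ioo (0:ℝ) 1)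
    (α : ℝ → ℝ) (hα : ∀ x, 0 < α x)
    (hsup : ∃ M : ℝ, M < 2 ∧ ∀ x, α x ≤ M) :
    Tendsto
      (fun x : ℝ => (1 + x) ^ (α x + θ) *
        ∫ y in (-1:ℝ)..1,
          ((1 + x) ^ (-θ) - (1 + x + y) ^ (-θ) - θ * (1 + x) ^ (-θ - 1) * y) *
            |y| ^ (-(α x) - 1))
      atTop (nhds 0) := by
  obtain ⟨hθ0, hθ1⟩ := hθ
  obtain ⟨M, hM2, hMle⟩ := hsup
  have hC0 : (0:ℝ) ≤ θ * (θ + 1) * 2 ^ (θ + 2) * (2 / (2 - M)) := by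
    have h2M : (0:ℝ) < 2 - M := by linarith
    have := Real.rpow_nonneg (show (0:ℝ) ≤ 2 by norm_num) (θ + 2)
    have := div_nonneg (show (0:ℝ) ≤ 2 by norm_num) h2M.le
    positivity
  apply squeeze_zero_norm'
    (a := fun x : ℝ => θ * (θ + 1) * 2 ^ (θ + 2) * (2 / (2 - M)) * (1 + x) ^ (M - 2))
  · filter_upwards [eventually_ge_atTop (1:ℝ)] with x hx
    set s : ℝ := 1 + x with hsdef
    have hs : 2 ≤ s := by rw [hsdef]; linarith
    have hs0 : (0:ℝ) < s := by linarith
    have hr : -1 < 1 - α x := by linarith [hMle x]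
    have hK0 : (0:ℝ) ≤ θ * (θ + 1) * (s - 1) ^ (-θ - 2) :=
      mul_nonneg (mul_nonneg hθ0.le (by linarith)) (Real.rpow_nonneg (by linarith) _)
    -- pointwise bound on the integrand
    have hbound : ∀ y ∈ Set.Icc (-1:ℝ) 1,
        ‖(s ^ (-θ) - (s + y) ^ (-θ) - θ * s ^ (-θ - 1) * y) * |y| ^ (-(α x) - 1)‖ ≤
          θ * (θ + 1) * (s - 1) ^ (-θ - 2) * |y| ^ (1 - α x) := by
      intro y hyIcc
      rcases eq_or_ne y 0 with rfl | hy0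
      · have hz : |(0:ℝ)| ^ (-(α x) - 1) = 0 := by
          rw [abs_zero, Real.zero_rpow (show -(α x) - 1 ≠ 0 by have := hα x; intro h; linarith)]
        rw [hz, mul_zero, norm_zero]
        exact mul_nonneg hK0 (Real.rpow_nonneg (abs_nonneg _) _)
      · have hay : (0:ℝ) < |y| := abs_pos.mpr hy0
        have hy2 : (y ^ 2 : ℝ) = |y| ^ (2:ℝ) := by
          rw [show (2:ℝ) = ((2:ℕ):ℝ) by norm_num, Real.rpow_natCast, sq_abs]
        have hmul : |y| ^ (2:ℝ) * |y| ^ (-(α x) - 1) = |y| ^ (1 - α x) := by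
          rw [← Real.rpow_add hay, show (2:ℝ) + (-(α x) - 1) = 1 - α x by ring]
        calc ‖(s ^ (-θ) - (s + y) ^ (-θ) - θ * s ^ (-θ - 1) * y) * |y| ^ (-(α x) - 1)‖
            = |s ^ (-θ) - (s + y) ^ (-θ) - θ * s ^ (-θ - 1) * y| * |y| ^ (-(α x) - 1) := by
              rw [norm_mul, Real.norm_eq_abs, Real.norm_eq_abs,
                abs_of_nonneg (Real.rpow_nonneg (abs_nonneg y) _)]
          _ ≤ θ * (θ + 1) * (s - 1) ^ (-θ - 2) * y ^ 2 * |y| ^ (-(α x) - 1) :=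
              mul_le_mul_of_nonneg_right (phi_bound hθ0 hs hyIcc)
                (Real.rpow_nonneg (abs_nonneg y) _)
          _ = θ * (θ + 1) * (s - 1) ^ (-θ - 2) * |y| ^ (1 - α x) := by
              rw [hy2, mul_assoc, hmul]
    -- bound the integral
    have hIntBound : ‖∫ y in (-1:ℝ)..1,
        (s ^ (-θ) - (s + y) ^ (-θ) - θ * s ^ (-θ - 1) * y) * |y| ^ (-(α x) - 1)‖ ≤
          θ * (θ + 1) * (s - 1) ^ (-θ - 2) * (2 / (2 - α x)) := by
      have hgint : IntervalIntegrable
          (fun y : ℝ => θ * (θ + 1) * (s - 1) ^ (-θ - 2) * |y| ^ (1 - α x))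
          volume (-1) 1 := (abs_rpow_ii hr).const_mul _
      have hae : ∀ᵐ t ∂(volume.restrict (Set.uIoc (-1:ℝ) 1)),
          ‖(s ^ (-θ) - (s + t) ^ (-θ) - θ * s ^ (-θ - 1) * t) * |t| ^ (-(α x) - 1)‖ ≤
            θ * (θ + 1) * (s - 1) ^ (-θ - 2) * |t| ^ (1 - α x) := by
        filter_upwards [ae_restrict_mem measurableSet_uIoc] with t htI
        rw [Set.uIoc_of_le (by norm_num : (-1:ℝ) ≤ 1)] at htI
        exact hbound t (Set.Ioc_subset_Icc_self htI)
      have h1 := intervalIntegral.norm_integral_le_abs_of_norm_le hae hgint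
      have h2 : ∫ y in (-1:ℝ)..1, θ * (θ + 1) * (s - 1) ^ (-θ - 2) * |y| ^ (1 - α x) =
          θ * (θ + 1) * (s - 1) ^ (-θ - 2) * (2 / (2 - α x)) := by
        rw [intervalIntegral.integral_const_mul, abs_rpow_int hr,
          show (1 - α x) + 1 = 2 - α x by ring]
      rw [h2] at h1
      refine h1.trans (le_of_eq (abs_of_nonneg ?_))
      exact mul_nonneg hK0 (div_nonneg (by norm_num) (by linarith [hMle x]))
    -- combine
    have hA : (s - 1) ^ (-θ - 2) ≤ 2 ^ (θ + 2) * s ^ (-θ - 2) := by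
      have h1 : (s - 1) ^ (-θ - 2) ≤ (s / 2) ^ (-θ - 2) :=
        Real.rpow_le_rpow_of_nonpos (by linarith) (by linarith) (by linarith)
      have h2 : (s / 2 : ℝ) ^ (-θ - 2) = 2 ^ (θ + 2) * s ^ (-θ - 2) := by
        rw [show (-θ - 2 : ℝ) = -(θ + 2) by ring, Real.rpow_neg (by positivity),
          ← Real.inv_rpow (by positivity), inv_div,
          Real.div_rpow (by norm_num) hs0.le, div_eq_mul_inv,
          ← Real.rpow_neg hs0.le]
      linarith [h1, h2.le, h2.ge]
    have hdiv : 2 / (2 - α x) ≤ 2 / (2 - M) := by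
      rw [div_le_div_iff₀ (by linarith [hMle x]) (by linarith)]
      nlinarith [hMle x, hα x]
    have hnorm : ‖s ^ (α x + θ)‖ = s ^ (α x + θ) :=
      Real.norm_of_nonneg (Real.rpow_nonneg hs0.le _)
    calc ‖s ^ (α x + θ) * ∫ y in (-1:ℝ)..1,
            (s ^ (-θ) - (s + y) ^ (-θ) - θ * s ^ (-θ - 1) * y) * |y| ^ (-(α x) - 1)‖
        = s ^ (α x + θ) * ‖∫ y in (-1:ℝ)..1,
            (s ^ (-θ) - (s + y) ^ (-θ) - θ * s ^ (-θ - 1) * y) * |y| ^ (-(α x) - 1)‖ := by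
          rw [norm_mul, hnorm]
      _ ≤ s ^ (α x + θ) * (θ * (θ + 1) * (s - 1) ^ (-θ - 2) * (2 / (2 - α x))) :=
          mul_le_mul_of_nonneg_left hIntBound (Real.rpow_nonneg hs0.le _)
      _ ≤ s ^ (α x + θ) * (θ * (θ + 1) * (2 ^ (θ + 2) * s ^ (-θ - 2)) * (2 / (2 - M))) := by
          refine mul_le_mul_of_nonneg_left ?_ (Real.rpow_nonneg hs0.le _)
          refine mul_le_mul ?_ hdiv
            (div_nonneg (by norm_num) (by linarith [hMle x])) ?_
          · exact mul_le_mul_of_nonneg_left hA (mul_nonneg hθ0.le (by linarith))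
          · have h2p := Real.rpow_nonneg (show (0:ℝ) ≤ 2 by norm_num) (θ + 2)
            have hsp := Real.rpow_nonneg hs0.le (-θ - 2)
            positivity
      _ = θ * (θ + 1) * 2 ^ (θ + 2) * (2 / (2 - M)) * (s ^ (α x + θ) * s ^ (-θ - 2)) := by
          ring
      _ = θ * (θ + 1) * 2 ^ (θ + 2) * (2 / (2 - M)) * s ^ (α x + θ + (-θ - 2)) := by
          rw [← Real.rpow_add hs0]
      _ = θ * (θ + 1) * 2 ^ (θ + 2) * (2 / (2 - M)) * s ^ (α x - 2) := by
          rw [show α x + θ + (-θ - 2) = α x - 2 by ring]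
      _ ≤ θ * (θ + 1) * 2 ^ (θ + 2) * (2 / (2 - M)) * s ^ (M - 2) :=
          mul_le_mul_of_nonneg_left
            (Real.rpow_le_rpow_of_exponent_le (by linarith) (by linarith [hMle x])) hC0
  · have h1 : Tendsto (fun x : ℝ => 1 + x) atTop atTop :=
      tendsto_atTop_add_const_left _ 1 tendsto_id
    have h2 : Tendsto (fun x : ℝ => (1 + x) ^ (M - 2)) atTop (nhds 0) := by
      have := (tendsto_rpow_neg_atTop (show (0:ℝ) < 2 - M by linarith)).comp h1
      simpa [Function.comp_def, neg_sub] using this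
    simpa using h2.const_mul (θ * (θ + 1) * 2 ^ (θ + 2) * (2 / (2 - M)))
end
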